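/- arXiv:2506.12155 — 5 statements merged into one kernel-verified Lean document; each statement's English description precedes it below -/
import Mathlib

section
/- Let μ be a distribution over {0,1}^m with full support (every point of {0,1}^m has positive probability). For every ε > 0 there exists γ > 0 such that the following holds for all n: if φ_1,…,φ_m : {0,1}^n → {0,1} are functions satisfying ε ≤ E_{(μ|_j)^n}[φ_j] ≤ 1 − ε for all j ∈ [m], then for every α ∈ {0,1}^m, Pr_{(y^{(1)},…,y^{(m)}) ~ μ^n}[(φ_1(y^{(1)}),…,φ_m(y^{(m)})) = α] > γ, where the n columns (y^{(1)}_i,…,y^{(m)}_i) are drawn i.i.d. from μ. -/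
open Finset

attribute [local instance 10] Classical.propDecidable

noncomputable section

/-- The marginal distribution of the `j`-th coordinate of a distribution `μ` on `{0,1}^m`. -/
def marg {m : ℕ} (μ : (Fin m → Bool) → ℝ) (j : Fin m) (b : Bool) : ℝ :=
  ∑ w : Fin m → Bool, if w j = b then μ w else 0

/-- The real value of a bit. -/
def bval (b : Bool) : ℝ := if b then 1 else 0

/-- The expectation `E_{ν^n}[φ]` of a Boolean function under a product distribution. -/
def expProd {n : ℕ} (ν : Bool → ℝ) (φ : (Fin n → Bool) → Bool) : ℝ :=
  ∑ x : Fin n → Bool, (∏ i, ν (x i)) * bval (φ x)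

/-!
Write `‖f‖_p` for the weighted power mean `(∑ ν f^p)^{1/p}` and let `δ = min μ`. The heart of the
proof is that for some small `p > 0` the inequality `∏ⱼ ‖fⱼ‖_{p, μ|ⱼ} ≤ E_μ[∏ⱼ fⱼ(wⱼ)]` holds for
all `fⱼ : {0,1} → ℝ≥0`. At `p = 0` it is Jensen's inequality for `log`; full support makes the
Jensen gap quadratic in the spreads of the `log fⱼ`, which absorbs the `O(p)` error, unless some
`fⱼ` has a tiny value relative to its maximum: then `‖fⱼ‖_p` alone is at most `δ · max fⱼ`, which
the weight of `μ` at the point of maxima covers. Both sides are multiplicative over independent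
copies, so the inequality passes to `μ^n`; for the indicators `fⱼ = 1[φⱼ = αⱼ]` its left side is
at least `ε^{m/p}`.
-/

open Real

lemma exp_neg_le_one_sub_add_sq {x : ℝ} (hx : |x| ≤ 1) : exp (-x) ≤ 1 - x + x ^ 2 := by
  have h := abs_exp_sub_one_sub_id_le (x := -x) (by rwa [abs_neg])
  rw [neg_sq] at h
  linarith [le_abs_self (exp (-x) - 1 - -x)]

lemma one_sub_add_sq_div_le_exp_neg (x : ℝ) : 1 - x + x ^ 2 / (4 * (1 + |x|)) ≤ exp (-x) := by
  rcases le_total x 0 with hx | hx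
  · have h := quadratic_le_exp_of_nonneg (neg_nonneg.2 hx)
    have : x ^ 2 / (4 * (1 + |x|)) ≤ x ^ 2 / 2 :=
      div_le_div_of_nonneg_left (sq_nonneg x) two_pos (by linarith [abs_nonneg x])
    rw [neg_sq] at h
    linarith
  rw [abs_of_nonneg hx]
  rcases le_total x 2 with hx2 | hx2
  · have h := add_one_le_exp (-x / 2)
    have hsq : (1 - x / 2) ^ 2 ≤ exp (-x) := by
      rw [show -x = -x / 2 + -x / 2 by ring, exp_add, ← sq]
      exact pow_le_pow_left₀ (by linarith) (by linarith) 2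
    have : x ^ 2 / (4 * (1 + x)) ≤ x ^ 2 / 4 :=
      div_le_div_of_nonneg_left (sq_nonneg x) four_pos (by linarith)
    nlinarith
  · have : x ^ 2 / (4 * (1 + x)) ≤ x - 1 := by
      rw [div_le_iff₀ (by positivity)]
      nlinarith
    linarith [exp_pos (-x)]

lemma exp_le_one_add_two_mul {x : ℝ} (hx₀ : 0 ≤ x) (hx₁ : x ≤ 1) : exp x ≤ 1 + 2 * x := by
  have h := abs_exp_sub_one_le (x := x) (by rwa [abs_of_nonneg hx₀])
  rw [abs_of_nonneg hx₀] at h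
  linarith [le_abs_self (exp x - 1)]

section PowerMean

variable {α : Type*} [Fintype α]

def powMean (ν : α → ℝ) (p : ℝ) (f : α → ℝ) : ℝ :=
  (∑ x, ν x * f x ^ p) ^ p⁻¹

variable {ν f : α → ℝ} {p : ℝ}

lemma sum_mul_rpow_nonneg (hν : ∀ x, 0 ≤ ν x) (hf : ∀ x, 0 ≤ f x) :
    0 ≤ ∑ x, ν x * f x ^ p :=
  sum_nonneg fun x _ => mul_nonneg (hν x) (rpow_nonneg (hf x) p)

lemma powMean_nonneg (hν : ∀ x, 0 ≤ ν x) (hf : ∀ x, 0 ≤ f x) : 0 ≤ powMean ν p f :=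
  rpow_nonneg (sum_mul_rpow_nonneg hν hf) _

lemma powMean_le_of_le {M : ℝ} (hν : ∀ x, 0 ≤ ν x) (hν₁ : ∑ x, ν x = 1) (hp : 0 < p)
    (hf : ∀ x, 0 ≤ f x) (hfM : ∀ x, f x ≤ M) : powMean ν p f ≤ M := by
  obtain ⟨x₀⟩ : Nonempty α := by
    by_contra h
    simp [not_nonempty_iff.1 h] at hν₁
  have hM : 0 ≤ M := (hf x₀).trans (hfM x₀)
  calc powMean ν p f ≤ (∑ x, ν x * M ^ p) ^ p⁻¹ := by
        refine rpow_le_rpow (sum_mul_rpow_nonneg hν hf) (sum_le_sum fun x _ => ?_)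
          (inv_nonneg.2 hp.le)
        exact mul_le_mul_of_nonneg_left (rpow_le_rpow (hf x) (hfM x) hp.le) (hν x)
    _ = M := by rw [← sum_mul, hν₁, one_mul, rpow_rpow_inv hM hp.ne']

lemma powMean_const_mul {c : ℝ} (hν : ∀ x, 0 ≤ ν x) (hp : p ≠ 0) (hc : 0 ≤ c)
    (hf : ∀ x, 0 ≤ f x) : powMean ν p (fun x => c * f x) = c * powMean ν p f := by
  simp only [powMean, mul_rpow hc (hf _), mul_left_comm (ν _), ← mul_sum]
  rw [mul_rpow (rpow_nonneg hc p) (sum_mul_rpow_nonneg hν hf), rpow_rpow_inv hc hp]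

lemma powMean_le_mul_of_le_exp_neg {M δ L : ℝ} {b : α} (hν : ∀ x, 0 ≤ ν x)
    (hν₁ : ∑ x, ν x = 1) (hp : 0 < p) (hf : ∀ x, 0 ≤ f x) (hfM : ∀ x, f x ≤ M) (hδ : 0 < δ)
    (hνb : δ ≤ ν b) (hL : 0 ≤ L) (hδL : 2 * log δ⁻¹ ≤ δ * L) (hpL : p * L ≤ 1 / 2)
    (hb : f b ≤ exp (-L) * M) : powMean ν p f ≤ δ * M := by
  have hM : 0 ≤ M := (hf b).trans (hfM b)
  have hMp : 0 ≤ M ^ p := rpow_nonneg hM p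
  have hfb : f b ^ p ≤ exp (-(p * L)) * M ^ p := by
    calc f b ^ p ≤ (exp (-L) * M) ^ p := rpow_le_rpow (hf b) hb hp.le
      _ = exp (-(p * L)) * M ^ p := by
        rw [mul_rpow (exp_pos _).le hM, ← exp_mul]
        ring_nf
  have hexp : exp (-(p * L)) ≤ 1 - p * L / 2 := by
    have hpL₀ : 0 ≤ p * L := mul_nonneg hp.le hL
    have := exp_neg_le_one_sub_add_sq (x := p * L) (by rw [abs_le]; constructor <;> linarith)
    nlinarith
  have hδp : 1 - p * log δ⁻¹ ≤ δ ^ p := by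
    rw [rpow_def_of_pos hδ, log_inv]
    linarith [add_one_le_exp (log δ * p)]
  have hsum : ∑ x, ν x * f x ^ p ≤ (δ * M) ^ p := by
    calc ∑ x, ν x * f x ^ p = M ^ p - ∑ x, ν x * (M ^ p - f x ^ p) := by
          simp only [mul_sub, sum_sub_distrib, ← sum_mul, hν₁, one_mul, sub_sub_cancel]
      _ ≤ M ^ p - ν b * (M ^ p - f b ^ p) := by
          gcongr
          exact single_le_sum (f := fun x => ν x * (M ^ p - f x ^ p))
            (fun x _ => mul_nonneg (hν x) (sub_nonneg.2 (rpow_le_rpow (hf x) (hfM x) hp.le)))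
            (mem_univ b)
      _ ≤ M ^ p - δ * (M ^ p * (p * L / 2)) := by
          have hgap : M ^ p * (p * L / 2) ≤ M ^ p - f b ^ p := by nlinarith
          have := mul_le_mul hνb hgap (by positivity) (hν b)
          linarith
      _ ≤ M ^ p * (1 - p * log δ⁻¹) := by
          have := mul_le_mul_of_nonneg_left hδL (mul_nonneg hMp hp.le)
          nlinarith
      _ ≤ (δ * M) ^ p := by
          rw [mul_rpow hδ.le hM, mul_comm (δ ^ p)]
          exact mul_le_mul_of_nonneg_left hδp hMp
  calc powMean ν p f ≤ ((δ * M) ^ p) ^ p⁻¹ :=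
        rpow_le_rpow (sum_mul_rpow_nonneg hν hf) hsum (inv_nonneg.2 hp.le)
    _ = δ * M := rpow_rpow_inv (mul_nonneg hδ.le hM) hp.ne'

lemma powMean_exp_neg_le {Z : α → ℝ} (hν : ∀ x, 0 ≤ ν x) (hν₁ : ∑ x, ν x = 1)
    (hZ : ∑ x, ν x * Z x = 0) (hp : 0 < p) (hpZ : ∀ x, |p * Z x| ≤ 1) :
    powMean ν p (fun x => exp (-Z x)) ≤ exp (p * ∑ x, ν x * Z x ^ 2) := by
  set V := ∑ x, ν x * Z x ^ 2
  have hsum : ∑ x, ν x * exp (-Z x) ^ p ≤ exp (p ^ 2 * V) := by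
    calc ∑ x, ν x * exp (-Z x) ^ p ≤ ∑ x, ν x * (1 - p * Z x + (p * Z x) ^ 2) := by
          refine sum_le_sum fun x _ => mul_le_mul_of_nonneg_left ?_ (hν x)
          rw [← exp_mul, neg_mul, mul_comm]
          exact exp_neg_le_one_sub_add_sq (hpZ x)
      _ = 1 + p ^ 2 * V := by
          simp only [mul_add, mul_sub, sum_add_distrib, sum_sub_distrib, mul_one, hν₁,
            mul_left_comm (ν _) p, ← mul_sum, hZ, mul_pow, mul_left_comm (ν _) (p ^ 2), V]
          ring
      _ ≤ exp (p ^ 2 * V) := by linarith [add_one_le_exp (p ^ 2 * V)]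
  calc powMean ν p (fun x => exp (-Z x)) ≤ exp (p ^ 2 * V) ^ p⁻¹ :=
        rpow_le_rpow (sum_mul_rpow_nonneg hν fun x => (exp_pos _).le) hsum (inv_nonneg.2 hp.le)
    _ = exp (p * V) := by
        rw [← exp_mul]
        field_simp

end PowerMean

lemma one_add_le_sum_exp_neg {β : Type*} [Fintype β] {μ Z : β → ℝ} {R : ℝ}
    (hμ : ∀ w, 0 ≤ μ w) (hμ₁ : ∑ w, μ w = 1) (hZ : ∑ w, μ w * Z w = 0)
    (hR : ∀ w, |Z w| ≤ R) :
    1 + (∑ w, μ w * Z w ^ 2) / (4 * (1 + R)) ≤ ∑ w, μ w * exp (-Z w) := by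
  calc 1 + (∑ w, μ w * Z w ^ 2) / (4 * (1 + R))
      = ∑ w, μ w * (1 - Z w + Z w ^ 2 / (4 * (1 + R))) := by
        simp only [mul_add, mul_sub, sum_add_distrib, sum_sub_distrib, mul_one, hμ₁, hZ,
          sum_div, mul_div_assoc]
        ring
    _ ≤ ∑ w, μ w * exp (-Z w) := by
        refine sum_le_sum fun w _ => mul_le_mul_of_nonneg_left ?_ (hμ w)
        have hR' : Z w ^ 2 / (4 * (1 + R)) ≤ Z w ^ 2 / (4 * (1 + |Z w|)) :=
          div_le_div_of_nonneg_left (sq_nonneg _) (by positivity) (by linarith [hR w])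
        linarith [one_sub_add_sq_div_le_exp_neg (Z w)]

lemma abs_le_abs_sub_of_sum_mul_eq_zero {ν Z : Bool → ℝ} (hν : ∀ b, 0 ≤ ν b)
    (hν₁ : ∑ b, ν b = 1) (hZ : ∑ b, ν b * Z b = 0) (b : Bool) :
    |Z b| ≤ |Z true - Z false| := by
  rw [Fintype.sum_bool] at hν₁ hZ
  have hνt : ν true ≤ 1 := by linarith [hν false]
  have hνf : ν false ≤ 1 := by linarith [hν true]
  cases b
  · have e : Z false = -(ν true * (Z true - Z false)) := by linear_combination hZ - Z false * hν₁
    conv_lhs => rw [e, abs_neg, abs_mul, abs_of_nonneg (hν true)]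
    exact mul_le_of_le_one_left (abs_nonneg _) hνt
  · have e : Z true = ν false * (Z true - Z false) := by linear_combination hZ - Z true * hν₁
    conv_lhs => rw [e, abs_mul, abs_of_nonneg (hν false)]
    exact mul_le_of_le_one_left (abs_nonneg _) hνf

lemma prod_powMean_exp_neg_le_exp_sum_sq {ι : Type*} [Fintype ι] {ν Z : ι → Bool → ℝ}
    {p L : ℝ} (hν : ∀ j b, 0 ≤ ν j b) (hν₁ : ∀ j, ∑ b, ν j b = 1)
    (hZ : ∀ j, ∑ b, ν j b * Z j b = 0) (hp : 0 < p) (hpL : p * L ≤ 1)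
    (hD : ∀ j, |Z j true - Z j false| ≤ L) :
    ∏ j, powMean (ν j) p (fun b => exp (-Z j b)) ≤
      exp (p * ∑ j, (Z j true - Z j false) ^ 2) := by
  have hZD (j b) : |Z j b| ≤ |Z j true - Z j false| :=
    abs_le_abs_sub_of_sum_mul_eq_zero (hν j) (hν₁ j) (hZ j) b
  rw [mul_sum, exp_sum]
  refine prod_le_prod (fun j _ => powMean_nonneg (hν j) fun b => (exp_pos _).le)
    fun j _ => (powMean_exp_neg_le (hν j) (hν₁ j) (hZ j) hp fun b => ?_).trans ?_
  · rw [abs_mul, abs_of_pos hp]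
    nlinarith [(hZD j b).trans (hD j)]
  · refine exp_le_exp.2 (mul_le_mul_of_nonneg_left ?_ hp.le)
    calc ∑ b, ν j b * Z j b ^ 2 ≤ ∑ b, ν j b * (Z j true - Z j false) ^ 2 :=
          sum_le_sum fun b _ => mul_le_mul_of_nonneg_left (sq_le_sq.2 (hZD j b)) (hν j b)
      _ = (Z j true - Z j false) ^ 2 := by rw [← sum_mul, hν₁, one_mul]

section Tensorization

variable {ι α : Type*}

def piDist {n : ℕ} (ν : α → ℝ) (x : Fin n → α) : ℝ := ∏ i, ν (x i)

lemma piDist_nonneg {n : ℕ} {ν : α → ℝ} (hν : ∀ a, 0 ≤ ν a) (x : Fin n → α) :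
    0 ≤ piDist ν x :=
  prod_nonneg fun i _ => hν (x i)

variable [Fintype ι] [DecidableEq ι] [Fintype α]

lemma sum_piDist_eq_one {n : ℕ} {ν : α → ℝ} (hν₁ : ∑ a, ν a = 1) :
    ∑ x : Fin n → α, piDist ν x = 1 := by
  simp only [piDist, ← Fintype.prod_sum, hν₁, prod_const_one]

lemma sum_piDist_succ {n : ℕ} (ν : α → ℝ) (F : (Fin (n + 1) → α) → ℝ) :
    ∑ x, piDist ν x * F x = ∑ a, ν a * ∑ y, piDist ν y * F (Fin.cons a y) := by
  rw [← (Fin.consEquiv fun _ => α).sum_comp, Fintype.sum_prod_type]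
  refine sum_congr rfl fun a _ => ?_
  rw [mul_sum]
  refine sum_congr rfl fun y _ => ?_
  simp [piDist, Fin.prod_univ_succ, Fin.consEquiv, mul_assoc]

lemma powMean_piDist_succ {n : ℕ} {ν : α → ℝ} {p : ℝ} (hν : ∀ a, 0 ≤ ν a) (hp : p ≠ 0)
    {f : (Fin (n + 1) → α) → ℝ} (hf : ∀ x, 0 ≤ f x) :
    powMean (piDist ν) p f =
      powMean ν p (fun a => powMean (piDist ν) p (fun y => f (Fin.cons a y))) := by
  unfold powMean
  rw [sum_piDist_succ]
  congr 1
  refine sum_congr rfl fun a _ => ?_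
  rw [rpow_inv_rpow (sum_mul_rpow_nonneg (piDist_nonneg hν) fun y => hf _) hp]

theorem prod_powMean_piDist_le {μ : (ι → α) → ℝ} {ν : ι → α → ℝ} {p : ℝ}
    (hμ : ∀ w, 0 ≤ μ w) (hν : ∀ j a, 0 ≤ ν j a) (hp : 0 < p)
    (h : ∀ f : ι → α → ℝ, (∀ j a, 0 ≤ f j a) →
      ∏ j, powMean (ν j) p (f j) ≤ ∑ w, μ w * ∏ j, f j (w j))
    (n : ℕ) (f : ι → (Fin n → α) → ℝ) (hf : ∀ j y, 0 ≤ f j y) :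
    ∏ j, powMean (piDist (ν j)) p (f j) ≤
      ∑ x : Fin n → ι → α, piDist μ x * ∏ j, f j (fun i => x i j) := by
  induction n with
  | zero =>
    simp [powMean, piDist, rpow_rpow_inv (hf _ _) hp.ne',
      Subsingleton.elim _ (default : Fin 0 → α)]
  | succ n ih =>
    have hcons (w : ι → α) (x : Fin n → ι → α) (j : ι) :
        (fun i => (Fin.cons w x : Fin (n + 1) → ι → α) i j) =
          Fin.cons (w j) (fun i => x i j) := by
      ext i
      refine Fin.cases ?_ (fun i => ?_) i <;> simp
    calc ∏ j, powMean (piDist (ν j)) p (f j)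
        = ∏ j, powMean (ν j) p
            (fun a => powMean (piDist (ν j)) p (fun y => f j (Fin.cons a y))) :=
          prod_congr rfl fun j _ => powMean_piDist_succ (hν j) hp.ne' (hf j)
      _ ≤ ∑ w, μ w * ∏ j, powMean (piDist (ν j)) p (fun y => f j (Fin.cons (w j) y)) :=
          h _ fun j a => powMean_nonneg (piDist_nonneg (hν j)) fun y => hf j _
      _ ≤ ∑ w, μ w * ∑ x : Fin n → ι → α,
            piDist μ x * ∏ j, f j (Fin.cons (w j) (fun i => x i j)) :=
          sum_le_sum fun w _ =>
            mul_le_mul_of_nonneg_left (ih (fun j y => f j (Fin.cons (w j) y)) fun j y => hf j _)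
              (hμ w)
      _ = ∑ x, piDist μ x * ∏ j, f j (fun i => x i j) := by
          simp only [sum_piDist_succ, hcons]

end Tensorization

section Marginals

variable {m : ℕ} {μ : (Fin m → Bool) → ℝ}

lemma sum_marg_mul (j : Fin m) (h : Bool → ℝ) :
    ∑ b, marg μ j b * h b = ∑ w, μ w * h (w j) := by
  simp only [marg, sum_mul, ite_mul, zero_mul]
  rw [sum_comm]
  exact sum_congr rfl fun w _ => by simp

lemma sum_marg (j : Fin m) : ∑ b, marg μ j b = ∑ w, μ w := by
  simpa using sum_marg_mul (μ := μ) j fun _ => 1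

lemma le_marg {δ : ℝ} (hδ : 0 ≤ δ) (hμ : ∀ w, δ ≤ μ w) (j : Fin m) (b : Bool) :
    δ ≤ marg μ j b :=
  (hμ fun _ => b).trans <| by
    unfold marg
    simpa using single_le_sum (f := fun w : Fin m → Bool => if w j = b then μ w else 0)
      (fun w _ => by split_ifs <;> linarith [hμ w]) (mem_univ fun _ => b)

end Marginals

section OneCopy

variable {m : ℕ} {μ : (Fin m → Bool) → ℝ} {δ : ℝ}

lemma mul_sq_sub_le_sum_mul_sq (hδ : 0 ≤ δ) (hμ : ∀ w, δ ≤ μ w) (Z : Fin m → Bool → ℝ)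
    (j : Fin m) :
    δ * (Z j true - Z j false) ^ 2 ≤ 2 * ∑ w, μ w * (∑ i, Z i (w i)) ^ 2 := by
  set w : Bool → Fin m → Bool := fun b => Function.update (fun _ => false) j b
  have hsum (b : Bool) : ∑ i, Z i (w b i) = Z j b + ∑ i ∈ univ.erase j, Z i false := by
    rw [← add_sum_erase _ _ (mem_univ j)]
    simp only [w, Function.update_self]
    congr 1
    exact sum_congr rfl fun i hi => by rw [Function.update_of_ne (ne_of_mem_erase hi)]
  have hne : w true ≠ w false := fun h => by simpa [w] using congrFun h j
  have hpair := sum_le_sum_of_subset_of_nonneg (subset_univ {w true, w false})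
    (f := fun w => μ w * (∑ i, Z i (w i)) ^ 2)
    fun w _ _ => mul_nonneg (hδ.trans (hμ w)) (sq_nonneg _)
  rw [sum_pair hne, hsum, hsum] at hpair
  set c := ∑ i ∈ univ.erase j, Z i false
  nlinarith [mul_le_mul_of_nonneg_right (hμ (w true)) (sq_nonneg (Z j true + c)),
    mul_le_mul_of_nonneg_right (hμ (w false)) (sq_nonneg (Z j false + c)),
    mul_nonneg hδ (sq_nonneg (Z j true + Z j false + 2 * c))]

variable {p L : ℝ}

lemma prod_powMean_exp_neg_le (hδ : 0 < δ) (hμ : ∀ w, δ ≤ μ w) (hμ₁ : ∑ w, μ w = 1)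
    (hp : 0 < p) (hL : 0 ≤ L) (hpL : p * L ≤ 1) (hpmL : p * (m * L ^ 2) ≤ 1)
    (hpδ : p * (16 * m * (1 + m * L)) ≤ δ) (Z : Fin m → Bool → ℝ)
    (hZ : ∀ j, ∑ b, marg μ j b * Z j b = 0) (hD : ∀ j, |Z j true - Z j false| ≤ L) :
    ∏ j, powMean (marg μ j) p (fun b => exp (-Z j b)) ≤
      ∑ w, μ w * exp (-∑ j, Z j (w j)) := by
  have hμ₀ (w) : 0 ≤ μ w := hδ.le.trans (hμ w)
  have hν (j b) : 0 ≤ marg μ j b := hδ.le.trans (le_marg hδ.le hμ j b)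
  have hν₁ (j) : ∑ b, marg μ j b = 1 := (sum_marg j).trans hμ₁
  set D : Fin m → ℝ := fun j => Z j true - Z j false
  have hZD (j b) : |Z j b| ≤ |D j| := abs_le_abs_sub_of_sum_mul_eq_zero (hν j) (hν₁ j) (hZ j) b
  set ZZ : (Fin m → Bool) → ℝ := fun w => ∑ j, Z j (w j)
  set Q := ∑ w, μ w * ZZ w ^ 2
  set S := ∑ j, D j ^ 2
  have hQ : 0 ≤ Q := sum_nonneg fun w _ => mul_nonneg (hμ₀ w) (sq_nonneg _)
  have hLHS : ∏ j, powMean (marg μ j) p (fun b => exp (-Z j b)) ≤ exp (p * S) :=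
    prod_powMean_exp_neg_le_exp_sum_sq hν hν₁ hZ hp hpL hD
  have hSL : S ≤ m * L ^ 2 := by
    calc S ≤ ∑ _j : Fin m, L ^ 2 :=
          sum_le_sum fun j _ => sq_le_sq.2 ((hD j).trans (le_abs_self L))
      _ = m * L ^ 2 := by simp
  have hSQ : δ * S ≤ 2 * m * Q := by
    calc δ * S = ∑ j, δ * D j ^ 2 := mul_sum _ _ _
      _ ≤ ∑ _j : Fin m, 2 * Q := sum_le_sum fun j _ => mul_sq_sub_le_sum_mul_sq hδ.le hμ Z j
      _ = 2 * m * Q := by simp; ring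
  have hRHS : 1 + Q / (4 * (1 + m * L)) ≤ ∑ w, μ w * exp (-ZZ w) := by
    refine one_add_le_sum_exp_neg hμ₀ hμ₁ ?_ fun w => ?_
    · simp only [ZZ, mul_sum]
      rw [sum_comm]
      exact sum_eq_zero fun j _ => (sum_marg_mul j (Z j)).symm.trans (hZ j)
    · calc |ZZ w| ≤ ∑ j, |Z j (w j)| := abs_sum_le_sum_abs _ _
        _ ≤ ∑ _j : Fin m, L := sum_le_sum fun j _ => (hZD j (w j)).trans (hD j)
        _ = m * L := by simp
  have hexp : exp (p * S) ≤ 1 + 2 * (p * S) :=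
    exp_le_one_add_two_mul (mul_nonneg hp.le (sum_nonneg fun j _ => sq_nonneg (D j)))
      ((mul_le_mul_of_nonneg_left hSL hp.le).trans hpmL)
  have hpSQ : 2 * (p * S) ≤ Q / (4 * (1 + m * L)) := by
    rw [le_div_iff₀ (by positivity)]
    refine le_of_mul_le_mul_left ?_ hδ
    calc δ * (2 * (p * S) * (4 * (1 + m * L))) = 8 * p * (1 + m * L) * (δ * S) := by ring
      _ ≤ 8 * p * (1 + m * L) * (2 * m * Q) := by gcongr
      _ = p * (16 * m * (1 + m * L)) * Q := by ring
      _ ≤ δ * Q := by gcongr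
  linarith

lemma prod_powMean_le_of_abs_log_sub_le (hδ : 0 < δ) (hμ : ∀ w, δ ≤ μ w)
    (hμ₁ : ∑ w, μ w = 1) (hp : 0 < p) (hL : 0 ≤ L) (hpL : p * L ≤ 1)
    (hpmL : p * (m * L ^ 2) ≤ 1) (hpδ : p * (16 * m * (1 + m * L)) ≤ δ)
    (f : Fin m → Bool → ℝ) (hf : ∀ j b, 0 < f j b)
    (hfL : ∀ j, |log (f j true) - log (f j false)| ≤ L) :
    ∏ j, powMean (marg μ j) p (f j) ≤ ∑ w, μ w * ∏ j, f j (w j) := by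
  have hν (j b) : 0 ≤ marg μ j b := hδ.le.trans (le_marg hδ.le hμ j b)
  set c : Fin m → ℝ := fun j => ∑ b, marg μ j b * log (f j b)
  set Z : Fin m → Bool → ℝ := fun j b => c j - log (f j b)
  have hfZ (j b) : f j b = exp (c j) * exp (-Z j b) := by
    rw [← exp_add, show c j + -Z j b = log (f j b) by ring, exp_log (hf j b)]
  have hZ (j) : ∑ b, marg μ j b * Z j b = 0 := by
    simp only [Z, mul_sub, sum_sub_distrib, ← sum_mul, sum_marg, hμ₁, one_mul, c, sub_self]
  have hD (j) : |Z j true - Z j false| ≤ L := by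
    rw [show Z j true - Z j false = -(log (f j true) - log (f j false)) by ring, abs_neg]
    exact hfL j
  calc ∏ j, powMean (marg μ j) p (f j)
      = exp (∑ j, c j) * ∏ j, powMean (marg μ j) p (fun b => exp (-Z j b)) := by
        rw [exp_sum, ← prod_mul_distrib]
        refine prod_congr rfl fun j _ => ?_
        rw [← powMean_const_mul (hν j) hp.ne' (exp_pos _).le fun b => (exp_pos _).le]
        exact congrArg _ (funext (hfZ j))
    _ ≤ exp (∑ j, c j) * ∑ w, μ w * exp (-∑ j, Z j (w j)) :=
        mul_le_mul_of_nonneg_left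
          (prod_powMean_exp_neg_le hδ hμ hμ₁ hp hL hpL hpmL hpδ Z hZ hD) (exp_pos _).le
    _ = ∑ w, μ w * ∏ j, f j (w j) := by
        rw [mul_sum]
        refine sum_congr rfl fun w _ => ?_
        rw [prod_congr rfl fun j _ => hfZ j (w j), prod_mul_distrib, ← exp_sum, ← exp_sum,
          sum_neg_distrib]
        ring

theorem prod_powMean_marg_le (hδ : 0 < δ) (hμ : ∀ w, δ ≤ μ w) (hμ₁ : ∑ w, μ w = 1)
    (hp : 0 < p) (hL : 0 ≤ L) (hδL : 2 * log δ⁻¹ ≤ δ * L) (hpL : p * L ≤ 1 / 2)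
    (hpmL : p * (m * L ^ 2) ≤ 1) (hpδ : p * (16 * m * (1 + m * L)) ≤ δ)
    (f : Fin m → Bool → ℝ) (hf : ∀ j b, 0 ≤ f j b) :
    ∏ j, powMean (marg μ j) p (f j) ≤ ∑ w, μ w * ∏ j, f j (w j) := by
  have hν (j b) : 0 ≤ marg μ j b := hδ.le.trans (le_marg hδ.le hμ j b)
  have hν₁ (j) : ∑ b, marg μ j b = 1 := (sum_marg j).trans hμ₁
  choose w hw using fun j => Finite.exists_max (f j)
  by_cases hgap : ∃ j b, f j b ≤ exp (-L) * f j (w j)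
  · obtain ⟨j₀, b, hb⟩ := hgap
    have hle (j) : powMean (marg μ j) p (f j) ≤ f j (w j) :=
      powMean_le_of_le (hν j) (hν₁ j) hp (hf j) (hw j)
    have hj₀ : powMean (marg μ j₀) p (f j₀) ≤ δ * f j₀ (w j₀) :=
      powMean_le_mul_of_le_exp_neg (hν j₀) (hν₁ j₀) hp (hf j₀) (hw j₀) hδ
        (le_marg hδ.le hμ j₀ b) hL hδL hpL hb
    calc ∏ j, powMean (marg μ j) p (f j)
        = powMean (marg μ j₀) p (f j₀) * ∏ j ∈ univ.erase j₀, powMean (marg μ j) p (f j) :=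
          (mul_prod_erase _ _ (mem_univ j₀)).symm
      _ ≤ δ * f j₀ (w j₀) * ∏ j ∈ univ.erase j₀, f j (w j) :=
          mul_le_mul hj₀ (prod_le_prod (fun j _ => powMean_nonneg (hν j) (hf j)) fun j _ => hle j)
            (prod_nonneg fun j _ => powMean_nonneg (hν j) (hf j))
            (mul_nonneg hδ.le (hf _ _))
      _ = δ * ∏ j, f j (w j) := by
          rw [mul_assoc, mul_prod_erase _ (fun j => f j (w j)) (mem_univ j₀)]
      _ ≤ μ w * ∏ j, f j (w j) := mul_le_mul_of_nonneg_right (hμ w) (prod_nonneg fun j _ => hf _ _)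
      _ ≤ ∑ w, μ w * ∏ j, f j (w j) :=
          single_le_sum (f := fun w => μ w * ∏ j, f j (w j))
            (fun w _ => mul_nonneg (hδ.le.trans (hμ w)) (prod_nonneg fun j _ => hf _ _))
            (mem_univ w)
  · push Not at hgap
    have hpos (j b) : 0 < f j b := (mul_nonneg (exp_pos _).le (hf j (w j))).trans_lt (hgap j b)
    refine prod_powMean_le_of_abs_log_sub_le hδ hμ hμ₁ hp hL (by linarith) hpmL hpδ f hpos
      fun j => ?_
    have hlog (b) : log (f j (w j)) - L < log (f j b) ∧ log (f j b) ≤ log (f j (w j)) := by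
      refine ⟨?_, log_le_log (hpos j b) (hw j b)⟩
      have := log_lt_log (mul_pos (exp_pos _) (hpos j (w j))) (hgap j b)
      rw [log_mul (exp_pos _).ne' (hpos j (w j)).ne', log_exp] at this
      linarith
    rw [abs_le]
    constructor <;> linarith [hlog true, hlog false]

theorem exists_prod_powMean_marg_le (hμ : ∀ w, 0 < μ w) (hμ₁ : ∑ w, μ w = 1) :
    ∃ p > 0, ∀ f : Fin m → Bool → ℝ, (∀ j b, 0 ≤ f j b) →
      ∏ j, powMean (marg μ j) p (f j) ≤ ∑ w, μ w * ∏ j, f j (w j) := by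
  set δ := univ.inf' univ_nonempty μ
  have hδ : 0 < δ := (lt_inf'_iff _).2 fun w _ => hμ w
  have hμδ (w) : δ ≤ μ w := inf'_le _ (mem_univ w)
  have hδ₁ : δ ≤ 1 :=
    (hμδ default).trans (hμ₁ ▸ single_le_sum (fun w _ => (hμ w).le) (mem_univ _))
  set L := 2 * log δ⁻¹ / δ
  have hL : 0 ≤ L := by
    have := log_nonpos hδ.le hδ₁
    exact div_nonneg (by rw [log_inv]; linarith) hδ.le
  set p := min (min (1 / (2 * L + 1)) (1 / (m * L ^ 2 + 1))) (δ / (16 * m * (1 + m * L) + 1))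
  have hp : 0 < p := by positivity
  have hle {a c : ℝ} (ha : 0 ≤ a) (h : p ≤ c / (a + 1)) : p * a ≤ c := by
    rw [le_div_iff₀ (by linarith)] at h
    nlinarith
  refine ⟨p, hp, prod_powMean_marg_le hδ hμδ hμ₁ hp hL (by rw [mul_div_cancel₀ _ hδ.ne']) ?_ ?_ ?_⟩
  · linarith [hle (c := 1) (by positivity) ((min_le_left _ _).trans (min_le_left _ _))]
  · exact hle (by positivity) ((min_le_left _ _).trans (min_le_right _ _))
  · exact hle (by positivity) (min_le_right _ _)

end OneCopy

lemma powMean_boole {α : Type*} [Fintype α] {ν : α → ℝ} {p : ℝ} (hp : p ≠ 0) (P : α → Prop)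
    [DecidablePred P] :
    powMean ν p (fun x => if P x then 1 else 0) = (∑ x, ν x * if P x then 1 else 0) ^ p⁻¹ := by
  unfold powMean
  congr 1
  refine sum_congr rfl fun x _ => ?_
  by_cases h : P x <;> simp [h, zero_rpow hp]

lemma le_sum_piDist_boole_eq {n : ℕ} {ν : Bool → ℝ} {ε : ℝ} (hν₁ : ∑ b, ν b = 1)
    {φ : (Fin n → Bool) → Bool} (hφ : ε ≤ expProd ν φ ∧ expProd ν φ ≤ 1 - ε) (b : Bool) :
    ε ≤ ∑ y, piDist ν y * if φ y = b then 1 else 0 := by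
  cases b
  · have : ∑ y, piDist ν y * (if φ y = false then 1 else 0) =
        ∑ y : Fin n → Bool, piDist ν y - expProd ν φ := by
      rw [expProd, ← sum_sub_distrib]
      refine sum_congr rfl fun y _ => ?_
      cases φ y <;> simp [piDist, bval]
    rw [sum_piDist_eq_one hν₁] at this
    linarith [hφ.2]
  · convert hφ.1 using 1
    refine sum_congr rfl fun y _ => ?_
    cases φ y <;> simp [piDist, bval]

/-- **Hitting lemma.** If `μ` has full support on `{0,1}^m` and each `φ_j` has expectation
bounded away from `0` and `1`, then every output pattern `α` occurs with probability
at least `γ`. -/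
theorem hitting_lemma
    (m : ℕ) (μ : (Fin m → Bool) → ℝ)
    (hpos : ∀ w, 0 < μ w) (hsum : ∑ w, μ w = 1)
    (ε : ℝ) (hε : 0 < ε) :
    ∃ γ > (0 : ℝ),
      ∀ (n : ℕ) (φ : Fin m → (Fin n → Bool) → Bool),
        (∀ j, ε ≤ expProd (marg μ j) (φ j) ∧ expProd (marg μ j) (φ j) ≤ 1 - ε) →
        ∀ α : Fin m → Bool,
          γ < ∑ x : Fin n → (Fin m → Bool), (∏ i, μ (x i)) *
                (if (fun j => φ j (fun i => x i j)) = α then 1 else 0) := by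
  obtain ⟨p, hp, hμp⟩ := exists_prod_powMean_marg_le hpos hsum
  have hν (j b) : 0 ≤ marg μ j b := le_marg le_rfl (fun w => (hpos w).le) j b
  refine ⟨(ε ^ p⁻¹) ^ m / 2, by positivity, fun n φ hφ α => ?_⟩
  set f : Fin m → (Fin n → Bool) → ℝ := fun j y => if φ j y = α j then 1 else 0
  have hf (j y) : 0 ≤ f j y := by positivity
  have hfj (j) : ε ^ p⁻¹ ≤ powMean (piDist (marg μ j)) p (f j) := by
    rw [powMean_boole hp.ne']
    exact rpow_le_rpow hε.le (le_sum_piDist_boole_eq ((sum_marg j).trans hsum) (hφ j) (α j))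
      (inv_nonneg.2 hp.le)
  have hpattern (x : Fin n → Fin m → Bool) : ∏ j, f j (fun i => x i j) =
      if (fun j => φ j (fun i => x i j)) = α then 1 else 0 := by
    simp only [f, Fintype.prod_boole, funext_iff]
    congr
  calc (ε ^ p⁻¹) ^ m / 2 < ∏ _j : Fin m, ε ^ p⁻¹ := by
        rw [prod_const, card_univ, Fintype.card_fin]
        exact half_lt_self (by positivity)
    _ ≤ ∏ j, powMean (piDist (marg μ j)) p (f j) :=
        prod_le_prod (fun _ _ => by positivity) fun j _ => hfj j
    _ ≤ ∑ x, piDist μ x * ∏ j, f j (fun i => x i j) :=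
        prod_powMean_piDist_le (fun w => (hpos w).le) hν hp hμp n f hf
    _ = _ := by simp only [hpattern, piDist]
end
end

section
/- Let P ⊆ {0,1}^m be a predicate, let μ be a distribution over P with full support, let d ∈ ℕ, τ > 0, let f_1,…,f_m : {0,1}^n → {0,1}, and let J ⊆ [n]. Suppose that for all j ∈ [m], Pr_{x ~ (μ|_j)^J}[f_j|_{J←x} is (d,τ)-regular with respect to μ|_j] ≥ 1 − ε. Then for all j ∈ [m], Pr_{x ~ (μ|_j)^J}[f_j|_{J←x} is (μ,d,τ)-good] ≥ 1 − mε. -/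
open Finset

attribute [local instance 10] Classical.propDecidable

noncomputable section

/-- The Fourier coefficient `f̂(S)` of `f : {0,1}^n → ℝ` with respect to the `p`-biased
measure `μ_p`, i.e. `E_{μ_p}[f(x) ∏_{i ∈ S} (x_i − p)/√(p(1−p))]`. -/
def biasedFourierCoeff {n : ℕ} (p : ℝ) (f : (Fin n → Bool) → ℝ) (S : Finset (Fin n)) : ℝ :=
  ∑ x : Fin n → Bool, (∏ i, if x i then p else 1 - p) * f x *
    ∏ i ∈ S, ((bval (x i) - p) / Real.sqrt (p * (1 - p)))

/-- The degree-`d` influence `Inf_i[f^{≤d}] = ∑_{|S| ≤ d, i ∈ S} f̂(S)²` w.r.t. `μ_p`. -/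
def degInf {n : ℕ} (p : ℝ) (d : ℕ) (f : (Fin n → Bool) → ℝ) (i : Fin n) : ℝ :=
  ∑ S : Finset (Fin n), if S.card ≤ d ∧ i ∈ S then (biasedFourierCoeff p f S) ^ 2 else 0

/-- `f` is `(d,τ)`-regular with respect to `μ_p`: all degree-`d` influences are at most `τ`. -/
def IsDegRegular {n : ℕ} (p : ℝ) (d : ℕ) (τ : ℝ) (f : (Fin n → Bool) → ℝ) : Prop :=
  ∀ i, degInf p d f i ≤ τ

/-- Merge `x : {0,1}^J` with `y` off `J`: the restricted function `f|_{J←x}` is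
represented as `fun y => f (mergeJ J x y)`. -/
def mergeJ {n : ℕ} (J : Finset (Fin n)) (x : ↥J → Bool) (y : Fin n → Bool) : Fin n → Bool :=
  fun i => if h : i ∈ J then x ⟨i, h⟩ else y i

/-- The subfunction `f_j|_{J←x}` is `(μ,d,τ)`-good: there are `x⁽¹⁾,…,x⁽ᵐ⁾ ∈ ({0,1}^J)^m`
with all columns in `P` and `x⁽ʲ⁾ = x` such that each `f_k|_{J←x⁽ᵏ⁾}` is `(d,τ)`-regular
with respect to `μ|_k`. -/
def IsGood {m n : ℕ} (P : Finset (Fin m → Bool)) (μ : (Fin m → Bool) → ℝ) (d : ℕ) (τ : ℝ)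
    (f : Fin m → (Fin n → Bool) → Bool) (J : Finset (Fin n)) (j : Fin m) (x : ↥J → Bool) :
    Prop :=
  ∃ xs : Fin m → (↥J → Bool),
    (∀ i : ↥J, (fun k => xs k i) ∈ P) ∧ xs j = x ∧
    ∀ k, IsDegRegular (marg μ k true) d τ (fun y => bval (f k (mergeJ J (xs k) y)))

lemma prod_ite_all {α : Type*} [Fintype α] (p : α → Prop) [DecidablePred p]
    [Decidable (∀ i, p i)] (a : α → ℝ) :
    (∏ i, if p i then a i else 0) = if ∀ i, p i then ∏ i, a i else 0 := by
  by_cases h : ∀ i, p i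
  · rw [if_pos h]; exact Finset.prod_congr rfl fun i _ => if_pos (h i)
  · rw [if_neg h]
    push_neg at h
    obtain ⟨i, hi⟩ := h
    exact Finset.prod_eq_zero (mem_univ i) (if_neg hi)

lemma marg_sum {m : ℕ} {J : Type*} [Fintype J] [DecidableEq J] (μ : (Fin m → Bool) → ℝ) (j : Fin m)
    (g : (J → Bool) → ℝ) :
    ∑ w : J → (Fin m → Bool), (∏ i, μ (w i)) * g (fun i => w i j)
      = ∑ x : J → Bool, (∏ i, marg μ j (x i)) * g x := by
  have h1 : ∀ x : J → Bool, (∏ i, marg μ j (x i))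
      = ∑ w : J → (Fin m → Bool), ∏ i, (if w i j = x i then μ (w i) else 0) := by
    intro x
    unfold marg
    rw [Finset.prod_univ_sum, Fintype.piFinset_univ]
  symm
  calc ∑ x : J → Bool, (∏ i, marg μ j (x i)) * g x
      = ∑ x : J → Bool, ∑ w : J → (Fin m → Bool),
          (∏ i, (if w i j = x i then μ (w i) else 0)) * g x := by
        refine Finset.sum_congr rfl fun x _ => ?_
        rw [h1 x, Finset.sum_mul]
    _ = ∑ w : J → (Fin m → Bool), ∑ x : J → Bool,
          (∏ i, (if w i j = x i then μ (w i) else 0)) * g x := Finset.sum_comm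
    _ = ∑ w : J → (Fin m → Bool), (∏ i, μ (w i)) * g (fun i => w i j) := by
        refine Finset.sum_congr rfl fun w _ => ?_
        have h2 : ∀ x : J → Bool, (∏ i, (if w i j = x i then μ (w i) else 0))
            = if (fun i => w i j) = x then ∏ i, μ (w i) else 0 := by
          intro x
          rw [prod_ite_all]
          congr 1
          simp [funext_iff]
        simp_rw [h2, ite_mul, zero_mul]
        rw [Finset.sum_ite_eq (univ : Finset (J → Bool)) (fun i => w i j)
          (fun x => (∏ i, μ (w i)) * g x)]
        simp

lemma mass_one {m : ℕ} {J : Type*} [Fintype J] [DecidableEq J] (μ : (Fin m → Bool) → ℝ)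
    (hsum : ∑ w, μ w = 1) :
    ∑ w : J → (Fin m → Bool), (∏ i, μ (w i)) = 1 := by
  rw [← Fintype.piFinset_univ, ← Finset.prod_univ_sum]
  simp [hsum]

set_option maxHeartbeats 1000000 in
/-- **Most subfunctions are good.** -/
theorem most_subfunctions_good
    (m n : ℕ) (P : Finset (Fin m → Bool))
    (μ : (Fin m → Bool) → ℝ)
    (hnn : ∀ w, 0 ≤ μ w) (hsupp : ∀ w, 0 < μ w ↔ w ∈ P) (hsum : ∑ w, μ w = 1)
    (d : ℕ) (τ : ℝ) (hτ : 0 < τ)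
    (f : Fin m → (Fin n → Bool) → Bool) (J : Finset (Fin n)) (ε : ℝ)
    (hreg : ∀ j, 1 - ε ≤ ∑ x : ↥J → Bool, (∏ i, marg μ j (x i)) *
      (if IsDegRegular (marg μ j true) d τ (fun y => bval (f j (mergeJ J x y))) then 1 else 0)) :
    ∀ j, 1 - m * ε ≤ ∑ x : ↥J → Bool, (∏ i, marg μ j (x i)) *
      (if IsGood P μ d τ f J j x then 1 else 0) := by
  intro j
  set Reg : Fin m → (↥J → Bool) → Prop := fun k x =>
    IsDegRegular (marg μ k true) d τ (fun y => bval (f k (mergeJ J x y))) with hReg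
  have hwt : ∀ w : ↥J → (Fin m → Bool), (0:ℝ) ≤ ∏ i, μ (w i) :=
    fun w => Finset.prod_nonneg fun i _ => hnn _
  have hmass : ∑ w : ↥J → (Fin m → Bool), (∏ i, μ (w i)) = 1 := mass_one μ hsum
  have hPr : ∀ k, 1 - ε ≤ ∑ w : ↥J → (Fin m → Bool), (∏ i, μ (w i)) *
      (if Reg k (fun i => w i k) then 1 else 0) := by
    intro k
    rw [marg_sum μ k (fun x => if Reg k x then 1 else 0)]
    exact hreg k
  rw [← marg_sum μ j (fun x => if IsGood P μ d τ f J j x then 1 else 0)]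
  -- pointwise: all-regular implies good (on the support)
  have hgw : ∀ w : ↥J → (Fin m → Bool),
      (∏ i, μ (w i)) * (if ∀ k, Reg k (fun i => w i k) then (1:ℝ) else 0)
      ≤ (∏ i, μ (w i)) * (if IsGood P μ d τ f J j (fun i => w i j) then 1 else 0) := by
    intro w
    by_cases hz : (∏ i, μ (w i)) = 0
    · rw [hz]; simp
    by_cases hall : ∀ k, Reg k (fun i => w i k)
    · rw [if_pos hall, if_pos]
      exact ⟨fun k i => w i k, fun i => (hsupp (w i)).mp
        (lt_of_le_of_ne (hnn (w i)) (Ne.symm (Finset.prod_ne_zero_iff.mp hz i (mem_univ i)))),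
        rfl, hall⟩
    · rw [if_neg hall, mul_zero]
      exact mul_nonneg (hwt w) (by positivity)
  -- union bound, pointwise
  have hind : ∀ w : ↥J → (Fin m → Bool),
      1 - (∑ k, (1 - (if Reg k (fun i => w i k) then (1:ℝ) else 0)))
      ≤ (if ∀ k, Reg k (fun i => w i k) then (1:ℝ) else 0) := by
    intro w
    by_cases h : ∀ k, Reg k (fun i => w i k)
    · rw [if_pos h]
      have : ∀ k : Fin m, (1 - (if Reg k (fun i => w i k) then (1:ℝ) else 0)) = 0 := by
        intro k; rw [if_pos (h k)]; ring
      rw [Finset.sum_congr rfl fun k _ => this k]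
      simp
    · rw [if_neg h]
      push_neg at h
      obtain ⟨k0, hk0⟩ := h
      have h1 : (1:ℝ) ≤ ∑ k, (1 - (if Reg k (fun i => w i k) then (1:ℝ) else 0)) := by
        refine le_trans ?_ (Finset.single_le_sum
          (f := fun k => (1 - (if Reg k (fun i => w i k) then (1:ℝ) else 0)))
          (fun k _ => by by_cases hh : Reg k (fun i => w i k) <;> simp [hh])
          (mem_univ k0))
        simp [hk0]
      linarith
  have step1 : ∑ w : ↥J → (Fin m → Bool), (∏ i, μ (w i)) *
      (1 - (∑ k, (1 - (if Reg k (fun i => w i k) then (1:ℝ) else 0))))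
      ≤ ∑ w : ↥J → (Fin m → Bool), (∏ i, μ (w i)) *
        (if IsGood P μ d τ f J j (fun i => w i j) then 1 else 0) := by
    refine Finset.sum_le_sum fun w _ => le_trans ?_ (hgw w)
    exact mul_le_mul_of_nonneg_left (hind w) (hwt w)
  refine le_trans ?_ step1
  have halg : ∑ w : ↥J → (Fin m → Bool), (∏ i, μ (w i)) *
      (1 - (∑ k, (1 - (if Reg k (fun i => w i k) then (1:ℝ) else 0))))
      = 1 - ∑ k, (1 - ∑ w : ↥J → (Fin m → Bool), (∏ i, μ (w i)) *
        (if Reg k (fun i => w i k) then 1 else 0)) := by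
    simp_rw [mul_sub, mul_one, Finset.mul_sum, Finset.sum_sub_distrib, hmass, mul_sub, mul_one]
    rw [Finset.sum_comm]
    simp_rw [Finset.sum_sub_distrib, hmass]
  rw [halg]
  have hbound : ∑ k : Fin m, (1 - ∑ w : ↥J → (Fin m → Bool), (∏ i, μ (w i)) *
      (if Reg k (fun i => w i k) then (1:ℝ) else 0)) ≤ m * ε := by
    calc _ ≤ ∑ _k : Fin m, ε := Finset.sum_le_sum fun k _ => by linarith [hPr k]
      _ = m * ε := by simp [mul_comm]
  linarith
end
end

section
/- Let μ be a full-support distribution on {0,1}. For every q ∈ (0,1) and every η ∈ (0,1/2), ζ > 0 there exists M ∈ ℕ such that the following holds for all n: let ν be the distribution on {0,1,*} given by ν(*) = q and ν(c) = (1−q)μ(c) for c ∈ {0,1}. If f = χ_{S,b} for some S ⊆ [n] with |S| ≥ M and b ∈ {0,1}, then Pr_{ρ ~ ν^n}[ η < E_{μ}[f|_ρ] < 1 − η ] ≥ 1 − ζ. -/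
/-!
In ±1 notation `χ_{S,b}(x) = (1 - (-1)^b ∏_{i ∈ S} (-1)^{x_i}) / 2`. Under a restriction `ρ`
a free coordinate contributes its mean `ε = μ(0) - μ(1)` and a fixed one a sign, so
`|2 E_μ[f|_ρ] - 1| = |ε|^{#(free coordinates in S)}`. Averaged over `ρ ~ ν^n` this product is
`θ^{|S|}` with `θ = 1 - q (1 - |ε|) < 1`, and by Markov's inequality it reaches `1 - 2η`, which
is what `E_μ[f|_ρ] ∉ (η, 1 - η)` means, with probability at most `θ^{|S|} / (1 - 2η)`.
-/

open Finset

attribute [local instance 10] Classical.propDecidable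

noncomputable section

/-- The XOR `⊕_{i ∈ S} x_i`. -/
def parity {k : ℕ} (S : Finset (Fin k)) (x : Fin k → Bool) : Bool :=
  decide ((S.filter fun i => x i = true).card % 2 = 1)

/-- The (possibly negated) character `χ_{S,b}(x) = b ⊕ ⊕_{i ∈ S} x_i`. -/
def chi {k : ℕ} (S : Finset (Fin k)) (b : Bool) (x : Fin k → Bool) : Bool :=
  xor b (parity S x)

/-- The expectation of `f` when the coordinates fixed by the restriction `ρ` are set
accordingly and the free coordinates are drawn i.i.d. from `ν`. -/
def condExp {n : ℕ} (ν : Bool → ℝ) (ρ : Fin n → Option Bool) (f : (Fin n → Bool) → ℝ) : ℝ :=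
  ∑ y : Fin n → Bool,
    (∏ i, (ρ i).elim (ν (y i)) (fun _ => if y i = false then (1 : ℝ) else 0)) *
    f (fun i => (ρ i).getD (y i))

def boolSign (c : Bool) : ℝ := if c then -1 else 1

lemma bval_eq_half_sub (c : Bool) : bval c = (1 - boolSign c) / 2 := by
  cases c <;> norm_num [bval, boolSign]

lemma boolSign_xor (a b : Bool) : boolSign (xor a b) = boolSign a * boolSign b := by
  cases a <;> cases b <;> simp [boolSign]

lemma abs_boolSign (c : Bool) : |boolSign c| = 1 := by
  cases c <;> simp [boolSign]

lemma boolSign_parity {k : ℕ} (S : Finset (Fin k)) (x : Fin k → Bool) :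
    boolSign (parity S x) = ∏ i ∈ S, boolSign (x i) := by
  have hprod : ∏ i ∈ S, boolSign (x i) = (-1) ^ (S.filter fun i => x i = true).card := by
    simp only [boolSign, prod_ite, prod_const, one_pow, mul_one]
  rw [hprod, neg_one_pow_eq_pow_mod_two, parity]
  rcases Nat.mod_two_eq_zero_or_one (S.filter fun i => x i = true).card with h | h <;>
    simp [h, boolSign]

lemma sum_pi_prod_mul_prod {ι α : Type*} [Fintype ι] [DecidableEq ι] [Fintype α]
    (w h : α → ℝ) (hw : ∑ a, w a = 1) (S : Finset ι) :
    ∑ ρ : ι → α, (∏ i, w (ρ i)) * ∏ i ∈ S, h (ρ i) = (∑ a, w a * h a) ^ S.card := by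
  calc ∑ ρ : ι → α, (∏ i, w (ρ i)) * ∏ i ∈ S, h (ρ i)
      = ∑ ρ : ι → α, ∏ i, (w (ρ i) * if i ∈ S then h (ρ i) else 1) := by
        simp only [prod_mul_distrib, prod_ite_mem_eq]
    _ = ∏ i, ∑ a, (w a * if i ∈ S then h a else 1) :=
        (Fintype.prod_sum fun i a => w a * if i ∈ S then h a else 1).symm
    _ = ∏ i, if i ∈ S then ∑ a, w a * h a else 1 := by
        congr! 1 with i
        split_ifs <;> simp [hw]
    _ = (∑ a, w a * h a) ^ S.card := by
        rw [prod_ite_mem_eq, prod_const]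

lemma sum_pi_prod {ι α : Type*} [Fintype ι] [DecidableEq ι] [Fintype α]
    (w : α → ℝ) (hw : ∑ a, w a = 1) :
    ∑ ρ : ι → α, ∏ i, w (ρ i) = 1 := by
  simpa using sum_pi_prod_mul_prod w 1 hw (∅ : Finset ι)

lemma condExp_prod {n : ℕ} (ν : Bool → ℝ) (ρ : Fin n → Option Bool) (h : Fin n → Bool → ℝ) :
    condExp ν ρ (fun x => ∏ i, h i (x i)) = ∏ i, (ρ i).elim (∑ c, ν c * h i c) (h i) := by
  calc condExp ν ρ (fun x => ∏ i, h i (x i))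
      = ∏ i, ∑ c, (ρ i).elim (ν c) (fun _ => if c = false then 1 else 0) * h i ((ρ i).getD c) := by
        simp only [condExp, Fintype.prod_sum, prod_mul_distrib]
    _ = ∏ i, (ρ i).elim (∑ c, ν c * h i c) (h i) := by
        congr! 1 with i
        cases ρ i <;> simp

lemma condExp_mul_add_mul {n : ℕ} (ν : Bool → ℝ) (ρ : Fin n → Option Bool)
    (a b : ℝ) (f g : (Fin n → Bool) → ℝ) :
    condExp ν ρ (fun x => a * f x + b * g x) = a * condExp ν ρ f + b * condExp ν ρ g := by
  simp only [condExp, mul_add, sum_add_distrib, mul_sum, mul_left_comm]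

lemma condExp_one {n : ℕ} (ν : Bool → ℝ) (hν : ∑ c, ν c = 1) (ρ : Fin n → Option Bool) :
    condExp ν ρ (fun _ => 1) = 1 := by
  have h := condExp_prod ν ρ (fun _ _ => 1)
  simp only [prod_const_one, mul_one, hν] at h
  rw [h]
  exact prod_eq_one fun i _ => by cases ρ i <;> rfl

lemma condExp_chi {n : ℕ} (ν : Bool → ℝ) (hν : ∑ c, ν c = 1) (ρ : Fin n → Option Bool)
    (S : Finset (Fin n)) (b : Bool) :
    condExp ν ρ (fun x => bval (chi S b x)) =
      1 / 2 - boolSign b / 2 * ∏ i ∈ S, (ρ i).elim (ν false - ν true) boolSign := by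
  have hchi : (fun x => bval (chi S b x)) = fun x =>
      1 / 2 * 1 + -(boolSign b / 2) * ∏ i, if i ∈ S then boolSign (x i) else 1 := by
    funext x
    rw [bval_eq_half_sub, chi, boolSign_xor, boolSign_parity, prod_ite_mem_eq]
    ring
  rw [hchi, condExp_mul_add_mul, condExp_one ν hν,
    condExp_prod ν ρ fun i c => if i ∈ S then boolSign c else 1, ← prod_ite_mem_eq S,
    mul_one, sub_eq_add_neg, ← neg_mul]
  congr! 3 with i
  split_ifs <;> cases ρ i <;> simp [boolSign] <;>
    linarith [Fintype.sum_bool ν]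

lemma abs_prod_elim_boolSign {n : ℕ} (ε : ℝ) (ρ : Fin n → Option Bool) (S : Finset (Fin n)) :
    |∏ i ∈ S, (ρ i).elim ε boolSign| = ∏ i ∈ S, (ρ i).elim |ε| (fun _ => 1) := by
  rw [abs_prod]
  exact prod_congr rfl fun i _ => by cases ρ i <;> simp [abs_boolSign]

lemma abs_two_mul_condExp_chi_sub_one {n : ℕ} (ν : Bool → ℝ) (hν : ∑ c, ν c = 1)
    (ρ : Fin n → Option Bool) (S : Finset (Fin n)) (b : Bool) :
    |2 * condExp ν ρ (fun x => bval (chi S b x)) - 1| =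
      ∏ i ∈ S, (ρ i).elim |ν false - ν true| (fun _ => 1) := by
  rw [condExp_chi ν hν, ← abs_prod_elim_boolSign, ← one_mul |∏ i ∈ S, _|, ← abs_boolSign b,
    ← abs_mul, ← abs_neg]
  ring_nf

lemma abs_sub_lt_one_of_pos (μ : Bool → ℝ) (hpos : ∀ c, 0 < μ c) (hsum : ∑ c, μ c = 1) :
    |μ false - μ true| < 1 := by
  rw [Fintype.sum_bool] at hsum
  rw [abs_lt]
  constructor <;> linarith [hpos true, hpos false]

lemma one_sub_abs_div_le_ite {η : ℝ} (hη : η < 1 / 2) (E : ℝ) :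
    1 - |2 * E - 1| / (1 - 2 * η) ≤ if η < E ∧ E < 1 - η then 1 else 0 := by
  have hη' : 0 < 1 - 2 * η := by linarith
  split_ifs with hE
  · linarith [div_nonneg (abs_nonneg (2 * E - 1)) hη'.le]
  · rw [sub_nonpos, one_le_div hη']
    rcases not_and_or.mp hE with hE | hE
    · exact le_abs.mpr (Or.inr (by linarith))
    · exact le_abs.mpr (Or.inl (by linarith))

-- The distribution `ν` on `{0,1,*}`, with `*` encoded as `none`.
def restrictionDist (q : ℝ) (μ : Bool → ℝ) (o : Option Bool) : ℝ :=
  o.elim q fun c => (1 - q) * μ c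

lemma restrictionDist_nonneg {q : ℝ} {μ : Bool → ℝ} (hq0 : 0 ≤ q) (hq1 : q ≤ 1)
    (hμ : ∀ c, 0 ≤ μ c) (o : Option Bool) : 0 ≤ restrictionDist q μ o := by
  cases o with
  | none => exact hq0
  | some c => exact mul_nonneg (by linarith) (hμ c)

lemma sum_restrictionDist_mul_elim (q : ℝ) {μ : Bool → ℝ} (hμ : ∑ c, μ c = 1) (t : ℝ) :
    ∑ o, restrictionDist q μ o * o.elim t (fun _ => 1) = 1 - q * (1 - t) := by
  simp only [Fintype.sum_option, restrictionDist, Option.elim, mul_one, ← mul_sum, hμ]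
  ring

lemma sum_restrictionDist (q : ℝ) {μ : Bool → ℝ} (hμ : ∑ c, μ c = 1) :
    ∑ o, restrictionDist q μ o = 1 := by
  simpa using sum_restrictionDist_mul_elim q hμ 1

theorem large_characters_balanced_general
    (μ : Bool → ℝ) (hpos : ∀ c, 0 < μ c) (hsum : ∑ c, μ c = 1)
    (q : ℝ) (hq0 : 0 < q) (hq1 : q < 1)
    (η ζ : ℝ) (hη : η < 1 / 2) (hζ : 0 < ζ) :
    ∃ M : ℕ, ∀ (n : ℕ) (S : Finset (Fin n)) (b : Bool), M ≤ S.card →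
      1 - ζ ≤ ∑ ρ : Fin n → Option Bool,
        (∏ i, (ρ i).elim q (fun c => (1 - q) * μ c)) *
        (if η < condExp μ ρ (fun x => bval (chi S b x)) ∧
            condExp μ ρ (fun x => bval (chi S b x)) < 1 - η then 1 else 0) := by
  set ε := |μ false - μ true|
  have hε : ε < 1 := abs_sub_lt_one_of_pos μ hpos hsum
  set θ := 1 - q * (1 - ε)
  have hθ0 : 0 ≤ θ := by nlinarith [abs_nonneg (μ false - μ true)]
  have hθ1 : θ < 1 := by nlinarith
  have hη' : 0 < 1 - 2 * η := by linarith
  obtain ⟨M, hM⟩ := exists_pow_lt_of_lt_one (mul_pos hζ hη') hθ1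
  refine ⟨M, fun n S b hS => ?_⟩
  change 1 - ζ ≤ ∑ ρ : Fin n → Option Bool, (∏ i, restrictionDist q μ (ρ i)) * _
  have hmass := sum_pi_prod (ι := Fin n) _ (sum_restrictionDist q hsum)
  have hbias : ∑ ρ : Fin n → Option Bool, (∏ i, restrictionDist q μ (ρ i)) *
      |2 * condExp μ ρ (fun x => bval (chi S b x)) - 1| = θ ^ S.card := by
    simp only [abs_two_mul_condExp_chi_sub_one μ hsum]
    rw [sum_pi_prod_mul_prod _ (fun o => o.elim ε fun _ => 1) (sum_restrictionDist q hsum),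
      sum_restrictionDist_mul_elim q hsum]
  calc 1 - ζ ≤ 1 - θ ^ S.card / (1 - 2 * η) := by
        rw [sub_le_sub_iff_left, div_le_iff₀ hη']
        exact (pow_le_pow_of_le_one hθ0 hθ1.le hS).trans hM.le
    _ = ∑ ρ : Fin n → Option Bool, (∏ i, restrictionDist q μ (ρ i)) *
          (1 - |2 * condExp μ ρ (fun x => bval (chi S b x)) - 1| / (1 - 2 * η)) := by
        simp only [mul_sub, mul_one, sum_sub_distrib, ← mul_div_assoc, ← sum_div, hmass, hbias]
    _ ≤ _ := sum_le_sum fun ρ _ => mul_le_mul_of_nonneg_left (one_sub_abs_div_le_ite hη _)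
          (prod_nonneg fun i _ => restrictionDist_nonneg hq0.le hq1.le (fun c => (hpos c).le) _)

/-- **Large characters are balanced.** Under a random restriction that leaves each
coordinate free with probability `q`, the restriction of a long character is, with
probability at least `1 − ζ`, bounded away from constant. -/
theorem large_characters_balanced
    (μ : Bool → ℝ) (hpos : ∀ c, 0 < μ c) (hsum : ∑ c, μ c = 1)
    (q : ℝ) (hq0 : 0 < q) (hq1 : q < 1)
    (η ζ : ℝ) (hη0 : 0 < η) (hη : η < 1 / 2) (hζ : 0 < ζ) :
    ∃ M : ℕ, ∀ (n : ℕ) (S : Finset (Fin n)) (b : Bool), M ≤ S.card →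
      1 - ζ ≤ ∑ ρ : Fin n → Option Bool,
        (∏ i, (ρ i).elim q (fun c => (1 - q) * μ c)) *
        (if η < condExp μ ρ (fun x => bval (chi S b x)) ∧
            condExp μ ρ (fun x => bval (chi S b x)) < 1 - η then 1 else 0) :=
  large_characters_balanced_general μ hpos hsum q hq0 hq1 η ζ hη hζ
end
end

section
/- Let X and Σ be finite sets, and let M be a symmetric bistochastic X × X matrix (M(x,y) = M(y,x) ≥ 0 with every row summing to 1) whose second largest eigenvalue λ = λ(M) satisfies λ < 1, with (unique) stationary distribution μ = μ(M). If a function f : X → Σ satisfies Pr_{(x,y) ~ M}[f(x) ≠ f(y)] ≤ ε, where (x,y) ~ M means x is drawn from μ and then y is drawn with probability M(x,y), then there exists σ ∈ Σ such that Pr_{x ~ μ}[f(x) ≠ σ] ≤ ε/(1 − λ). -/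
open Finset

attribute [local instance 10] Classical.propDecidable

/-!
For each value `σ`, the indicator of `f⁻¹(σ)` minus its mean is orthogonal to the constants, so
the spectral gap yields the Poincaré inequality `(1 - λ) Var ≤ ℰ`, where `ℰ(g)` is the Dirichlet
form `½ 𝔼_{(x,y) ~ M} (g x - g y)²`. Summed over `σ`, the Dirichlet forms of the indicators add up
to the disagreement probability, at most `ε`, while their variances `p_σ (1 - p_σ)` add up to at
least `1 - max p_σ`. Hence the most frequent value of `f` is taken with probability at least
`1 - ε / (1 - λ)`.
-/

section Dirichlet

variable {X : Type*} [Fintype X] (M : X → X → ℝ)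

theorem sum_sum_mul_sub_sq_eq (hrow : ∀ x, ∑ y, M x y = 1) (hcol : ∀ y, ∑ x, M x y = 1)
    (g : X → ℝ) :
    ∑ x, ∑ y, M x y * (g x - g y) ^ 2 = 2 * (∑ x, g x ^ 2 - ∑ x, ∑ y, M x y * g x * g y) := by
  have hleft : ∑ x, ∑ y, M x y * g x ^ 2 = ∑ x, g x ^ 2 := by
    simp [← sum_mul, hrow]
  have hright : ∑ x, ∑ y, M x y * g y ^ 2 = ∑ y, g y ^ 2 := by
    rw [sum_comm]; simp [← sum_mul, hcol]
  have hexpand : ∀ x y, M x y * (g x - g y) ^ 2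
      = M x y * g x ^ 2 + M x y * g y ^ 2 - 2 * (M x y * g x * g y) := fun x y => by ring
  simp only [hexpand, sum_add_distrib, sum_sub_distrib, ← mul_sum, hleft, hright]
  ring

theorem poincare_of_spectral_gap (hrow : ∀ x, ∑ y, M x y = 1) (hcol : ∀ y, ∑ x, M x y = 1)
    {lam : ℝ} (hgap : ∀ g : X → ℝ, (∑ x, g x = 0) →
      ∑ x, ∑ y, M x y * g x * g y ≤ lam * ∑ x, (g x) ^ 2)
    (g : X → ℝ) {m : ℝ} (hm : ∑ x, (g x - m) = 0) :
    2 * (1 - lam) * ∑ x, (g x - m) ^ 2 ≤ ∑ x, ∑ y, M x y * (g x - g y) ^ 2 := by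
  have hshift : ∀ x y, g x - g y = (g x - m) - (g y - m) := fun x y => by ring
  simp only [hshift]
  rw [sum_sum_mul_sub_sq_eq M hrow hcol]
  linarith [hgap (fun x => g x - m) hm]

end Dirichlet

theorem sum_indicator_sub_mean_sq {X : Type*} [Fintype X] [Nonempty X] (p : X → Prop) :
    ∑ x, ((if p x then (1 : ℝ) else 0) - #{x | p x} / Fintype.card X) ^ 2
      = #{x | p x} * (Fintype.card X - #{x | p x}) / Fintype.card X := by
  have hN : (Fintype.card X : ℝ) ≠ 0 := by positivity
  have hsq : ∀ x, ((if p x then (1 : ℝ) else 0) - #{x | p x} / Fintype.card X) ^ 2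
      = (1 - 2 * (#{x | p x} / Fintype.card X)) * (if p x then 1 else 0)
        + (#{x | p x} / Fintype.card X) ^ 2 := fun x => by split_ifs <;> ring
  simp only [hsq, sum_add_distrib, ← mul_sum, sum_boole, sum_const, card_univ,
    nsmul_eq_mul]
  field_simp
  ring

theorem sum_sq_sub_fiber_indicator {X Γ : Type*} [Fintype Γ] (f : X → Γ) (x y : X) :
    ∑ σ, ((if f x = σ then (1 : ℝ) else 0) - if f y = σ then 1 else 0) ^ 2
      = 2 * if f x ≠ f y then 1 else 0 := by
  have hsq : ∀ σ, ((if f x = σ then (1 : ℝ) else 0) - if f y = σ then 1 else 0) ^ 2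
      = (if f x = σ then 1 else 0) + (if f y = σ then 1 else 0)
        - 2 * if f x = σ ∧ f y = σ then 1 else 0 := fun σ => by split_ifs <;> simp_all; norm_num
  have hboth : ∑ σ, (if f x = σ ∧ f y = σ then (1 : ℝ) else 0) = if f x = f y then 1 else 0 := by
    split_ifs with h
    · simp [h]
    · exact sum_eq_zero fun σ _ => if_neg fun hσ => h (hσ.1.trans hσ.2.symm)
  simp only [hsq, sum_sub_distrib, sum_add_distrib, ← mul_sum, hboth,
    sum_ite_eq, mem_univ, if_true]
  split_ifs <;> simp_all <;> norm_num

theorem exists_mul_sub_le_sum_mul_sub {Γ : Type*} [Fintype Γ] [Nonempty Γ] {c : Γ → ℝ}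
    (hc : ∀ σ, 0 ≤ c σ) {N : ℝ} (hN : ∑ σ, c σ = N) :
    ∃ σ, N * (N - c σ) ≤ ∑ τ, c τ * (N - c τ) := by
  obtain ⟨σ, -, hmax⟩ := exists_max_image univ c univ_nonempty
  refine ⟨σ, ?_⟩
  calc N * (N - c σ) = ∑ τ, c τ * (N - c σ) := by rw [← sum_mul, hN]
    _ ≤ ∑ τ, c τ * (N - c τ) := sum_le_sum fun τ _ =>
      mul_le_mul_of_nonneg_left (by linarith [hmax τ (mem_univ τ)]) (hc τ)

theorem one_sub_mul_sum_card_fiber_le {X Γ : Type*} [Fintype X] [Nonempty X] [Fintype Γ]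
    {M : X → X → ℝ} (hrow : ∀ x, ∑ y, M x y = 1) (hcol : ∀ y, ∑ x, M x y = 1)
    {lam : ℝ} (hgap : ∀ g : X → ℝ, (∑ x, g x = 0) →
      ∑ x, ∑ y, M x y * g x * g y ≤ lam * ∑ x, (g x) ^ 2)
    (f : X → Γ) :
    (1 - lam) * ∑ σ, (#{x | f x = σ} * (Fintype.card X - #{x | f x = σ}) / Fintype.card X : ℝ)
      ≤ ∑ x, ∑ y, M x y * if f x ≠ f y then 1 else 0 := by
  have hN : (Fintype.card X : ℝ) ≠ 0 := by positivity
  have hfiber : ∀ σ, 2 * (1 - lam) *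
      (#{x | f x = σ} * (Fintype.card X - #{x | f x = σ}) / Fintype.card X : ℝ)
      ≤ ∑ x, ∑ y, M x y * ((if f x = σ then 1 else 0) - if f y = σ then 1 else 0) ^ 2 := by
    intro σ
    rw [← sum_indicator_sub_mean_sq]
    refine poincare_of_spectral_gap M hrow hcol hgap _ ?_
    rw [sum_sub_distrib, sum_boole]
    simp only [sum_const, card_univ, nsmul_eq_mul]
    field_simp
    ring
  have hsum := sum_le_sum fun σ (_ : σ ∈ univ) => hfiber σ
  rw [← mul_sum, sum_comm] at hsum
  simp only [sum_comm (γ := Γ), ← mul_sum, sum_sq_sub_fiber_indicator] at hsum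
  simp only [mul_left_comm _ (2 : ℝ), ← mul_sum] at hsum
  linarith

theorem exists_one_sub_mul_card_ne_le {X Γ : Type*} [Fintype X] [Nonempty X] [Fintype Γ]
    {M : X → X → ℝ} (hrow : ∀ x, ∑ y, M x y = 1) (hcol : ∀ y, ∑ x, M x y = 1)
    {lam : ℝ} (hlam : lam ≤ 1) (hgap : ∀ g : X → ℝ, (∑ x, g x = 0) →
      ∑ x, ∑ y, M x y * g x * g y ≤ lam * ∑ x, (g x) ^ 2)
    (f : X → Γ) :
    ∃ σ, (1 - lam) * #{x | f x ≠ σ} ≤ ∑ x, ∑ y, M x y * if f x ≠ f y then 1 else 0 := by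
  set N : ℝ := (Fintype.card X : ℝ)
  have hN : 0 < N := by positivity
  have hfibers : ∑ σ, (#{x | f x = σ} : ℝ) = N := by
    rw [← Nat.cast_sum, ← card_eq_sum_card_fiberwise fun x _ => mem_univ (f x), card_univ]
  have : Nonempty Γ := ⟨f (Classical.arbitrary X)⟩
  obtain ⟨σ, hσ⟩ := exists_mul_sub_le_sum_mul_sub (fun σ => Nat.cast_nonneg _) hfibers
  refine ⟨σ, ?_⟩
  have hsplit : (#{x | f x ≠ σ} : ℝ) = N - #{x | f x = σ} := by
    rw [eq_sub_iff_add_eq', ← Nat.cast_add, card_filter_add_card_filter_not, card_univ]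
  have hσ' : N - #{x | f x = σ} ≤ ∑ τ, (#{x | f x = τ} * (N - #{x | f x = τ}) / N : ℝ) := by
    rw [← sum_div, le_div_iff₀ hN]
    linarith
  calc (1 - lam) * #{x | f x ≠ σ}
      ≤ (1 - lam) * ∑ τ, (#{x | f x = τ} * (N - #{x | f x = τ}) / N : ℝ) := by
        rw [hsplit]
        exact mul_le_mul_of_nonneg_left hσ' (sub_nonneg.2 hlam)
    _ ≤ ∑ x, ∑ y, M x y * if f x ≠ f y then 1 else 0 :=
        one_sub_mul_sum_card_fiber_le hrow hcol hgap f

/-- The hypothesis `hgap` is the Courant–Fischer form of `λ(M) ≤ lam`. -/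
theorem agreement_lemma_markov_general
    {X Γ : Type*} [Fintype X] [Nonempty X] [Fintype Γ]
    (M : X → X → ℝ)
    (hsymm : ∀ x y, M x y = M y x)
    (hrow : ∀ x, ∑ y, M x y = 1)
    (lam : ℝ) (hlam : lam < 1)
    (hgap : ∀ g : X → ℝ, (∑ x, g x = 0) →
      ∑ x, ∑ y, M x y * g x * g y ≤ lam * ∑ x, (g x) ^ 2)
    (f : X → Γ) (ε : ℝ)
    (hf : ∑ x, ∑ y, ((Fintype.card X : ℝ))⁻¹ * M x y * (if f x ≠ f y then 1 else 0) ≤ ε) :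
    ∃ σ : Γ, ∑ x, ((Fintype.card X : ℝ))⁻¹ * (if f x ≠ σ then 1 else 0) ≤ ε / (1 - lam) := by
  have hcol : ∀ y, ∑ x, M x y = 1 := fun y => by simpa only [hsymm y] using hrow y
  obtain ⟨σ, hσ⟩ := exists_one_sub_mul_card_ne_le hrow hcol hlam.le hgap f
  refine ⟨σ, ?_⟩
  simp only [mul_assoc, ← mul_sum] at hf
  rw [← mul_sum, sum_boole, le_div_iff₀ (sub_pos.2 hlam)]
  calc (Fintype.card X : ℝ)⁻¹ * #{x | f x ≠ σ} * (1 - lam)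
      = (Fintype.card X : ℝ)⁻¹ * ((1 - lam) * #{x | f x ≠ σ}) := by ring
    _ ≤ (Fintype.card X : ℝ)⁻¹ * ∑ x, ∑ y, M x y * if f x ≠ f y then 1 else 0 := by gcongr
    _ ≤ ε := hf

/-- **Agreement lemma for Markov chains.** `M` is a symmetric bistochastic matrix on the
finite set `X`, whose stationary distribution is uniform.  The hypothesis `hgap` states,
via the variational (Courant–Fischer) characterization, that the second largest
eigenvalue of `M` is at most `lam`: for every `g` orthogonal to the constants,
`E_{(x,y) ~ M}[g(x)g(y)] ≤ lam · E[g²]` (both sides normalized by `|X|`). -/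
theorem agreement_lemma_markov
    {X Γ : Type*} [Fintype X] [Nonempty X] [Fintype Γ]
    (M : X → X → ℝ)
    (hsymm : ∀ x y, M x y = M y x)
    (hnn : ∀ x y, 0 ≤ M x y)
    (hrow : ∀ x, ∑ y, M x y = 1)
    (lam : ℝ) (hlam : lam < 1)
    (hgap : ∀ g : X → ℝ, (∑ x, g x = 0) →
      ∑ x, ∑ y, M x y * g x * g y ≤ lam * ∑ x, (g x) ^ 2)
    (f : X → Γ) (ε : ℝ)
    (hf : ∑ x, ∑ y, ((Fintype.card X : ℝ))⁻¹ * M x y * (if f x ≠ f y then 1 else 0) ≤ ε) :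
    ∃ σ : Γ, ∑ x, ((Fintype.card X : ℝ))⁻¹ * (if f x ≠ σ then 1 else 0) ≤ ε / (1 - lam) :=
  agreement_lemma_markov_general M hsymm hrow lam hlam hgap f ε hf
end

section
/- Let Y and Σ be finite sets, and let M_1,…,M_t be symmetric bistochastic Y × Y matrices, each with strictly positive entries. There exists C > 0 such that the following holds for all n: given ψ : [n] → [t], let M_ψ be the distribution on pairs in Y^n × Y^n obtained by sampling the i-th coordinate pair independently according to M_{ψ(i)} (i.e., x_i from the stationary distribution μ(M_{ψ(i)}) and y_i with probability M_{ψ(i)}(x_i, y_i)), and let μ_ψ be the product distribution whose i-th factor is μ(M_{ψ(i)}). If a function f : Y^n → Σ satisfies Pr_{(x,y) ~ M_ψ}[f(x) ≠ f(y)] ≤ ε, then there exists σ ∈ Σ such that Pr_{x ~ μ_ψ}[f(x) ≠ σ] ≤ Cε. -/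
/-!
Let `T = ⊗ᵢ M_{ψ i}` be the transition matrix on `Y^n`. Every `M_k` dominates `δ` times the
all-ones matrix, so on functions of zero sum it shrinks squared norms by the factor
`1 - |Y| δ`. This bound tensorises: split a function on `Y × Y^{n-1}` into its fibrewise means
and fluctuations; the first factor contracts the means, the remaining ones the fluctuations.
Such a contraction yields the Poincaré inequality `‖g‖² - ‖T g‖² ≥ |Y| δ ‖g - mean g‖²`, and
`‖g‖² - ‖T g‖²` is at most twice the Dirichlet form `‖g‖² - ⟨g, T g⟩` because
`‖g - T g‖² ≥ 0`. For the indicators of the fibres of `f`, the Dirichlet forms add up to the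
disagreement probability and the variances to at least the distance from `f` to its most
frequent value.
-/

open Finset Matrix

open scoped Kronecker

attribute [local instance 10] Classical.propDecidable

lemma sum_mulVec_sq_le {m n : Type*} [Fintype m] [Fintype n] {N : Matrix m n ℝ} {r s : ℝ}
    (hN : ∀ i j, 0 ≤ N i j) (hrow : ∀ i, ∑ j, N i j = r) (hcol : ∀ j, ∑ i, N i j = s)
    (v : n → ℝ) :
    ∑ i, (N *ᵥ v) i ^ 2 ≤ r * s * ∑ j, v j ^ 2 := by
  have jensen : ∀ i, (N *ᵥ v) i ^ 2 ≤ r * ∑ j, N i j * v j ^ 2 := fun i => by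
    rw [← hrow i]
    exact sum_sq_le_sum_mul_sum_of_sq_le_mul _ (fun j _ => hN i j)
      (fun j _ => mul_nonneg (hN i j) (sq_nonneg _)) fun j _ => le_of_eq (by ring)
  calc ∑ i, (N *ᵥ v) i ^ 2 ≤ ∑ i, r * ∑ j, N i j * v j ^ 2 := sum_le_sum fun i _ => jensen i
    _ = r * s * ∑ j, v j ^ 2 := by
      simp_rw [← mul_sum, mul_assoc]
      rw [sum_comm]
      simp_rw [← sum_mul, hcol, ← mul_sum]

/-- For a doubly stochastic `T` this says that `√r` bounds the singular values of `T` other than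
the trivial one. -/
def ContractsMeanZero {X : Type*} [Fintype X] (T : Matrix X X ℝ) (r : ℝ) : Prop :=
  ∀ h : X → ℝ, ∑ x, h x = 0 → ∑ x, (T *ᵥ h) x ^ 2 ≤ r * ∑ x, h x ^ 2

lemma contractsMeanZero_of_le {Y : Type*} [Fintype Y] {M : Matrix Y Y ℝ}
    (hM : M ∈ doublyStochastic ℝ Y) {δ : ℝ} (hδ : 0 ≤ δ) (hle : ∀ a b, δ ≤ M a b) :
    ContractsMeanZero M (1 - Fintype.card Y * δ) := by
  intro h hh
  set N : Matrix Y Y ℝ := M - of fun _ _ => δ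
  have hsum : ∀ a, ∑ b, N a b = 1 - Fintype.card Y * δ := fun a => by
    simp [N, sum_sub_distrib, sum_row_of_mem_doublyStochastic hM]
  have hsum' : ∀ b, ∑ a, N a b = 1 - Fintype.card Y * δ := fun b => by
    simp [N, sum_sub_distrib, sum_col_of_mem_doublyStochastic hM]
  have hMN : M *ᵥ h = N *ᵥ h := by
    ext a; simp [N, mulVec, dotProduct, sub_mul, sum_sub_distrib, ← mul_sum, hh]
  have hN : ∀ a b, 0 ≤ N a b := fun a b => sub_nonneg.2 (hle a b)
  have hnonneg : 0 ≤ (1 - Fintype.card Y * δ) * ∑ b, h b ^ 2 := by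
    rw [mul_sum]
    refine sum_nonneg fun b _ => ?_
    rw [← hsum' b]
    exact mul_nonneg (sum_nonneg fun a _ => hN a b) (sq_nonneg _)
  have hcδ : 0 ≤ (Fintype.card Y : ℝ) * δ := by positivity
  rw [hMN]
  linarith [sum_mulVec_sq_le hN hsum hsum' h, mul_nonneg hcδ hnonneg]

lemma sum_const_add_sq {X : Type*} [Fintype X] (k : ℝ) {w : X → ℝ} (hw : ∑ x, w x = 0) :
    ∑ x, (k + w x) ^ 2 = Fintype.card X * k ^ 2 + ∑ x, w x ^ 2 := by
  simp [add_sq, sum_add_distrib, mul_assoc, ← mul_sum, hw]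

lemma sum_sub_mean_eq_zero {X : Type*} [Fintype X] [Nonempty X] (v : X → ℝ) :
    ∑ x, (v x - (∑ y, v y) / Fintype.card X) = 0 := by
  rw [sum_sub_distrib, sum_const, card_univ, nsmul_eq_mul,
    mul_div_cancel₀ _ (Nat.cast_ne_zero.2 Fintype.card_ne_zero), sub_self]

lemma sum_mulVec_of_one_vecMul {X : Type*} [Fintype X] {T : Matrix X X ℝ} (hT : 1 ᵥ* T = 1)
    (v : X → ℝ) : ∑ x, (T *ᵥ v) x = ∑ x, v x := by
  rw [← one_dotProduct, dotProduct_mulVec, hT, one_dotProduct]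

lemma ContractsMeanZero.sum_mulVec_const_add_sq_le {X : Type*} [Fintype X] {T : Matrix X X ℝ}
    {r : ℝ} (hT : ContractsMeanZero T r) (hT₁ : T *ᵥ 1 = 1) (hT₂ : 1 ᵥ* T = 1) (k : ℝ)
    {w : X → ℝ} (hw : ∑ x, w x = 0) :
    ∑ x, (T *ᵥ fun y => k + w y) x ^ 2 ≤ Fintype.card X * k ^ 2 + r * ∑ x, w x ^ 2 := by
  have hTw : T *ᵥ (fun y => k + w y) = fun x => k + (T *ᵥ w) x := by
    have : (fun y => k + w y) = k • (1 : X → ℝ) + w := by ext; simp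
    rw [this, mulVec_add, mulVec_smul, hT₁]; ext; simp
  rw [hTw, sum_const_add_sq k ((sum_mulVec_of_one_vecMul hT₂ w).trans hw)]
  gcongr
  exact hT w hw

lemma kronecker_mulVec_apply {l m n p : Type*} [Fintype m] [Fintype p] (M : Matrix l m ℝ)
    (T : Matrix n p ℝ) (H : m × p → ℝ) (a : l) (x : n) :
    (M ⊗ₖ T *ᵥ H) (a, x) = (T *ᵥ fun y => (M *ᵥ fun b => H (b, y)) a) x := by
  simp only [mulVec, dotProduct, kronecker_apply, Fintype.sum_prod_type, mul_sum]
  rw [sum_comm]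
  exact sum_congr rfl fun _ _ => sum_congr rfl fun _ _ => by ring

theorem ContractsMeanZero.kronecker {A B : Type*} [Fintype A] [Fintype B] [Nonempty B]
    {M : Matrix A A ℝ} {T : Matrix B B ℝ} {r : ℝ} (hr : 0 ≤ r) (hM : M ∈ doublyStochastic ℝ A)
    (hMr : ContractsMeanZero M r) (hT : ContractsMeanZero T r) (hT₁ : T *ᵥ 1 = 1)
    (hT₂ : 1 ᵥ* T = 1) : ContractsMeanZero (M ⊗ₖ T) r := by
  intro H hH
  set m : A → ℝ := fun b => (∑ y, H (b, y)) / Fintype.card B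
  set g : A → B → ℝ := fun b y => H (b, y) - m b
  have hg : ∀ b, ∑ y, g b y = 0 := fun b => sum_sub_mean_eq_zero _
  have hm : ∑ b, m b = 0 := by
    simp only [m, ← sum_div, ← Fintype.sum_prod_type', hH, zero_div]
  have hH_eq : ∀ b y, H (b, y) = m b + g b y := fun b y => by simp [g]
  have hsplit : ∀ a y, (M *ᵥ fun b => H (b, y)) a = (M *ᵥ m) a + (M *ᵥ fun b => g b y) a := by
    intro a y
    simp only [hH_eq, ← Pi.add_apply, ← mulVec_add]
    rfl
  have hG : ∀ a, ∑ y, (M *ᵥ fun b => g b y) a = 0 := fun a => by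
    simp only [mulVec, dotProduct]
    rw [sum_comm]
    simp [← mul_sum, hg]
  calc ∑ p, (M ⊗ₖ T *ᵥ H) p ^ 2
      = ∑ a, ∑ x, (T *ᵥ fun y => (M *ᵥ m) a + (M *ᵥ fun b => g b y) a) x ^ 2 := by
        simp only [Fintype.sum_prod_type, kronecker_mulVec_apply, hsplit]
    _ ≤ ∑ a, (Fintype.card B * (M *ᵥ m) a ^ 2 + r * ∑ y, (M *ᵥ fun b => g b y) a ^ 2) :=
        sum_le_sum fun a _ => hT.sum_mulVec_const_add_sq_le hT₁ hT₂ _ (hG a)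
    _ = Fintype.card B * ∑ a, (M *ᵥ m) a ^ 2 + r * ∑ y, ∑ a, (M *ᵥ fun b => g b y) a ^ 2 := by
        rw [sum_add_distrib, ← mul_sum, ← mul_sum, sum_comm]
    _ ≤ Fintype.card B * (r * ∑ b, m b ^ 2) + r * ∑ y, ∑ b, g b y ^ 2 := by
        refine add_le_add (by gcongr; exact hMr m hm)
          (mul_le_mul_of_nonneg_left (sum_le_sum fun y _ => ?_) hr)
        simpa using sum_mulVec_sq_le (fun _ _ => nonneg_of_mem_doublyStochastic hM)
          (sum_row_of_mem_doublyStochastic hM) (sum_col_of_mem_doublyStochastic hM) (g · y)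
    _ = r * ∑ p, H p ^ 2 := by
        simp only [Fintype.sum_prod_type, hH_eq, sum_const_add_sq _ (hg _), sum_add_distrib,
          mul_add, mul_sum]
        rw [sum_comm (f := fun y b => r * g b y ^ 2)]
        congr 1
        exact sum_congr rfl fun _ _ => by ring

lemma ContractsMeanZero.submatrix_equiv {X X' : Type*} [Fintype X] [Fintype X']
    {T : Matrix X X ℝ} {r : ℝ} (hT : ContractsMeanZero T r) (e : X' ≃ X) :
    ContractsMeanZero (T.submatrix e e) r := by
  intro h hh
  have hsum : ∀ v : X' → ℝ, ∑ x, v (e.symm x) = ∑ x', v x' := fun v => e.symm.sum_comp v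
  rw [submatrix_mulVec_equiv, ← hsum, ← hsum (h · ^ 2)]
  simpa using hT (h ∘ e.symm) ((hsum h).trans hh)

def piKronecker {n : ℕ} {Y : Type*} (K : Fin n → Matrix Y Y ℝ) :
    Matrix (Fin n → Y) (Fin n → Y) ℝ :=
  of fun x y => ∏ i, K i (x i) (y i)

lemma piKronecker_succ {n : ℕ} {Y : Type*} (K : Fin (n + 1) → Matrix Y Y ℝ) :
    piKronecker K = (K 0 ⊗ₖ piKronecker fun i => K i.succ).submatrix
      (Fin.consEquiv fun _ => Y).symm (Fin.consEquiv fun _ => Y).symm := by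
  ext x y
  simp [piKronecker, Fin.prod_univ_succ, Fin.tail]

lemma piKronecker_mem_doublyStochastic {n : ℕ} {Y : Type*} [Fintype Y]
    {K : Fin n → Matrix Y Y ℝ} (hK : ∀ i, K i ∈ doublyStochastic ℝ Y) :
    piKronecker K ∈ doublyStochastic ℝ (Fin n → Y) := by
  refine mem_doublyStochastic_iff_sum.2 ⟨fun x y => ?_, fun x => ?_, fun y => ?_⟩ <;>
    simp only [piKronecker, of_apply]
  · exact prod_nonneg fun i _ => nonneg_of_mem_doublyStochastic (hK i)
  · simp [← Fintype.prod_sum (fun i b => K i (x i) b),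
      sum_row_of_mem_doublyStochastic (hK _)]
  · simp [← Fintype.prod_sum (fun i a => K i a (y i)),
      sum_col_of_mem_doublyStochastic (hK _)]

theorem contractsMeanZero_piKronecker {Y : Type*} [Fintype Y] [Nonempty Y] {r : ℝ} (hr : 0 ≤ r)
    {n : ℕ} {K : Fin n → Matrix Y Y ℝ} (hK : ∀ i, K i ∈ doublyStochastic ℝ Y)
    (hKr : ∀ i, ContractsMeanZero (K i) r) : ContractsMeanZero (piKronecker K) r := by
  induction n with
  | zero =>
    intro h hh
    have : h = 0 := funext fun x => by simpa [Unique.eq_default x] using hh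
    simp [this]
  | succ n ih =>
    have hK' := piKronecker_mem_doublyStochastic fun i => hK i.succ
    rw [piKronecker_succ]
    exact ((hKr 0).kronecker hr (hK 0) (ih (fun i => hK i.succ) fun i => hKr i.succ)
      (mulVec_one_of_mem_doublyStochastic hK') (one_vecMul_of_mem_doublyStochastic hK')
      ).submatrix_equiv _

lemma ContractsMeanZero.poincare {X : Type*} [Fintype X] [Nonempty X] {T : Matrix X X ℝ}
    {r : ℝ} (hT : ContractsMeanZero T r) (hT₁ : T *ᵥ 1 = 1) (hT₂ : 1 ᵥ* T = 1) (g : X → ℝ) :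
    (1 - r) * (∑ x, g x ^ 2 - (∑ x, g x) ^ 2 / Fintype.card X) ≤
      ∑ x, g x ^ 2 - ∑ x, (T *ᵥ g) x ^ 2 := by
  set k := (∑ x, g x) / Fintype.card X with hk_def
  have hw : ∑ x, (g x - k) = 0 := sum_sub_mean_eq_zero g
  have hnorm := sum_const_add_sq k hw
  have hTg : ∑ x, (T *ᵥ g) x ^ 2 ≤ Fintype.card X * k ^ 2 + r * ∑ x, (g x - k) ^ 2 := by
    simpa only [add_sub_cancel] using hT.sum_mulVec_const_add_sq_le hT₁ hT₂ k hw
  simp only [add_sub_cancel] at hnorm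
  have hk : (∑ x, g x) ^ 2 / Fintype.card X = Fintype.card X * k ^ 2 := by
    have : (Fintype.card X : ℝ) ≠ 0 := Nat.cast_ne_zero.2 Fintype.card_ne_zero
    rw [hk_def]
    field_simp
  rw [hk, show ∑ x, g x ^ 2 - Fintype.card X * k ^ 2 = ∑ x, (g x - k) ^ 2 by linarith]
  linarith

/-- For a doubly stochastic `T` this is `½ ∑ x, ∑ y, T x y * (g x - g y) ^ 2`. -/
def dirichletForm {X : Type*} [Fintype X] (T : Matrix X X ℝ) (g : X → ℝ) : ℝ :=
  ∑ x, g x ^ 2 - ∑ x, g x * (T *ᵥ g) x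

lemma sum_sq_sub_sum_mulVec_sq_le {X : Type*} [Fintype X] (T : Matrix X X ℝ) (g : X → ℝ) :
    ∑ x, g x ^ 2 - ∑ x, (T *ᵥ g) x ^ 2 ≤ 2 * dirichletForm T g := by
  have := sum_nonneg fun x (_ : x ∈ univ) => sq_nonneg (g x - (T *ᵥ g) x)
  simp only [sub_sq, sum_add_distrib, sum_sub_distrib, mul_assoc, ← mul_sum] at this
  unfold dirichletForm
  linarith

lemma sum_dirichletForm_ite_eq {X Γ : Type*} [Fintype X] [Fintype Γ] {T : Matrix X X ℝ}
    (hT₁ : T *ᵥ 1 = 1) (f : X → Γ) :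
    ∑ σ, dirichletForm T (fun x => if f x = σ then 1 else 0) =
      ∑ x, ∑ y, T x y * (if f x ≠ f y then 1 else 0) := by
  have hrow : ∀ x, ∑ y, T x y = 1 := fun x => by
    simpa [mulVec, dotProduct] using congrFun hT₁ x
  have hform : ∀ g : X → ℝ, dirichletForm T g = ∑ x, ∑ y, T x y * (g x ^ 2 - g x * g y) :=
    fun g => by
      simp only [dirichletForm, mulVec, dotProduct, mul_sub, sum_sub_distrib, ← sum_mul, hrow,
        one_mul, mul_sum, mul_left_comm]
  have hcolour : ∀ x y, ∑ σ, ((if f x = σ then (1 : ℝ) else 0) ^ 2 -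
      (if f x = σ then 1 else 0) * (if f y = σ then 1 else 0)) = if f x ≠ f y then 1 else 0 := by
    intro x y
    by_cases h : f x = f y <;> simp [h, ite_pow, ← ite_and, sum_sub_distrib]
  simp_rw [hform, ← hcolour, mul_sum]
  rw [sum_comm]
  exact sum_congr rfl fun x _ => sum_comm

lemma exists_sum_ite_ne_le_sum_fiber {X Γ : Type*} [Fintype X] [Nonempty X] [Fintype Γ]
    (f : X → Γ) :
    ∃ σ, ∑ x, (if f x ≠ σ then (1 : ℝ) else 0) ≤
      ∑ τ, ((#{x | f x = τ} : ℝ) - (#{x | f x = τ} : ℝ) ^ 2 / Fintype.card X) := by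
  set p : Γ → ℝ := fun τ => #{x | f x = τ}
  have hN : (Fintype.card X : ℝ) ≠ 0 := Nat.cast_ne_zero.2 Fintype.card_ne_zero
  have hp : ∑ τ, p τ = Fintype.card X := by
    simp only [p]
    exact_mod_cast (card_eq_sum_card_fiberwise fun x _ => mem_univ (f x)).symm
  obtain ⟨σ, -, hσ⟩ := exists_max_image univ p ⟨f (Classical.arbitrary X), mem_univ _⟩
  refine ⟨σ, ?_⟩
  have hne : ∑ x, (if f x ≠ σ then (1 : ℝ) else 0) = Fintype.card X - p σ := by
    simp only [p, ← sum_boole]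
    rw [eq_sub_iff_add_eq, ← sum_add_distrib, ← card_univ, card_eq_sum_ones, Nat.cast_sum]
    exact sum_congr rfl fun x _ => by by_cases h : f x = σ <;> simp [h]
  calc ∑ x, (if f x ≠ σ then (1 : ℝ) else 0)
      = ∑ τ, (p τ - p τ * p σ / Fintype.card X) := by
        rw [hne, sum_sub_distrib, ← sum_div, ← sum_mul, hp, mul_div_cancel_left₀ _ hN]
    _ ≤ ∑ τ, (p τ - p τ ^ 2 / Fintype.card X) := by
        gcongr with τ
        rw [sq]
        exact mul_le_mul_of_nonneg_left (hσ τ (mem_univ τ)) (Nat.cast_nonneg _)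

theorem ContractsMeanZero.exists_sum_ite_ne_le {X Γ : Type*} [Fintype X] [Nonempty X] [Fintype Γ]
    {T : Matrix X X ℝ} {r : ℝ} (hT : ContractsMeanZero T r) (hr : r ≤ 1) (hT₁ : T *ᵥ 1 = 1)
    (hT₂ : 1 ᵥ* T = 1) (f : X → Γ) :
    ∃ σ, (1 - r) / 2 * ∑ x, (if f x ≠ σ then (1 : ℝ) else 0) ≤
      ∑ x, ∑ y, T x y * (if f x ≠ f y then 1 else 0) := by
  obtain ⟨σ, hσ⟩ := exists_sum_ite_ne_le_sum_fiber f
  refine ⟨σ, ?_⟩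
  rw [← sum_dirichletForm_ite_eq hT₁]
  calc (1 - r) / 2 * ∑ x, (if f x ≠ σ then (1 : ℝ) else 0)
      ≤ (1 - r) / 2 *
          ∑ τ, ((#{x | f x = τ} : ℝ) - (#{x | f x = τ} : ℝ) ^ 2 / Fintype.card X) := by
        gcongr
    _ ≤ ∑ τ, dirichletForm T (fun x => if f x = τ then 1 else 0) := by
        rw [mul_sum]
        refine sum_le_sum fun τ _ => ?_
        have hpoincare := hT.poincare hT₁ hT₂ fun x => if f x = τ then 1 else 0
        have hdirichlet := sum_sq_sub_sum_mulVec_sq_le T fun x => if f x = τ then 1 else 0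
        simp only [ite_pow, one_pow, ne_eq, OfNat.ofNat_ne_zero, not_false_eq_true, zero_pow,
          sum_boole] at hpoincare hdirichlet
        linarith

theorem exists_sum_ite_ne_le_piKronecker {Y Γ : Type*} [Fintype Y] [Nonempty Y] [Fintype Γ]
    {n : ℕ} {K : Fin n → Matrix Y Y ℝ} (hK : ∀ i, K i ∈ doublyStochastic ℝ Y) {δ : ℝ}
    (hδ : 0 ≤ δ) (hδ₁ : Fintype.card Y * δ ≤ 1) (hKδ : ∀ i a b, δ ≤ K i a b)
    (f : (Fin n → Y) → Γ) :
    ∃ σ, Fintype.card Y * δ / 2 * ∑ x, (if f x ≠ σ then (1 : ℝ) else 0) ≤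
      ∑ x, ∑ y, piKronecker K x y * (if f x ≠ f y then 1 else 0) := by
  have hT := piKronecker_mem_doublyStochastic hK
  have hgap : ContractsMeanZero (piKronecker K) (1 - Fintype.card Y * δ) :=
    contractsMeanZero_piKronecker (sub_nonneg.2 hδ₁) hK fun i =>
      contractsMeanZero_of_le (hK i) hδ (hKδ i)
  simpa using hgap.exists_sum_ite_ne_le (by simp only [sub_le_self_iff]; positivity)
    (mulVec_one_of_mem_doublyStochastic hT) (one_vecMul_of_mem_doublyStochastic hT) f

/-- **Agreement lemma for product chains.**  `M 1, …, M t` are symmetric bistochastic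
matrices on the finite set `Y` with strictly positive entries; their stationary
distributions are uniform on `Y`.  For `ψ : [n] → [t]`, the distribution `M_ψ` on pairs
samples each coordinate pair independently: `x_i` uniform and `y_i` with probability
`M_{ψ(i)}(x_i, y_i)`, and `μ_ψ` is the uniform (product of stationary) distribution on
`Y^n`.  If `f` agrees on a random edge of `M_ψ` with probability `1 − ε`, then `f` is
`Cε`-close to a constant. -/
theorem agreement_lemma_product_chains
    {Y Γ : Type*} [Fintype Y] [Nonempty Y] [Fintype Γ] (t : ℕ)
    (M : Fin t → Y → Y → ℝ)
    (hsymm : ∀ k x y, M k x y = M k y x)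
    (hpos : ∀ k x y, 0 < M k x y)
    (hrow : ∀ k x, ∑ y, M k x y = 1) :
    ∃ C > (0 : ℝ), ∀ (n : ℕ) (ψ : Fin n → Fin t) (f : (Fin n → Y) → Γ) (ε : ℝ),
      (∑ x : Fin n → Y, ∑ y : Fin n → Y,
        (∏ i, ((Fintype.card Y : ℝ))⁻¹ * M (ψ i) (x i) (y i)) *
        (if f x ≠ f y then 1 else 0)) ≤ ε →
      ∃ σ : Γ, ∑ x : Fin n → Y,
        (∏ _i : Fin n, ((Fintype.card Y : ℝ))⁻¹) * (if f x ≠ σ then 1 else 0) ≤ C * ε := by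
  set c : ℝ := (Fintype.card Y : ℝ)
  have hc : 0 < c := Nat.cast_pos.2 Fintype.card_pos
  obtain ⟨δ, hδ, hδc, hδM⟩ : ∃ δ > 0, δ ≤ c⁻¹ ∧ ∀ k x y, δ ≤ M k x y :=
    Filter.Eventually.exists_gt <| (eventually_le_nhds (inv_pos.2 hc)).and <|
      Filter.eventually_all.2 fun k => Filter.eventually_all.2 fun x =>
        Filter.eventually_all.2 fun y => eventually_le_nhds (hpos k x y)
  have hcδ : c * δ ≤ 1 := by simpa [hc.ne'] using mul_le_mul_of_nonneg_left hδc hc.le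
  have hM : ∀ k, M k ∈ doublyStochastic ℝ Y := fun k =>
    mem_doublyStochastic_iff_sum.2 ⟨fun x y => (hpos k x y).le, hrow k,
      fun y => by simpa only [hsymm k _ y] using hrow k y⟩
  refine ⟨2 / (c * δ), by positivity, fun n ψ f ε hε => ?_⟩
  obtain ⟨σ, hσ⟩ := exists_sum_ite_ne_le_piKronecker (fun i => hM (ψ i)) hδ.le hcδ
    (fun i => hδM (ψ i)) f
  refine ⟨σ, ?_⟩
  have hprod : ∀ x y, ∏ i, c⁻¹ * M (ψ i) (x i) (y i) =
      c⁻¹ ^ n * piKronecker (fun i => M (ψ i)) x y := fun x y => by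
    simp [piKronecker, prod_mul_distrib]
  simp only [hprod, prod_const, card_univ, Fintype.card_fin, mul_assoc, ← mul_sum] at hε ⊢
  rw [div_mul_eq_mul_div, le_div_iff₀ (by positivity)]
  calc c⁻¹ ^ n * (∑ x, if f x ≠ σ then 1 else 0) * (c * δ)
      = 2 * c⁻¹ ^ n * (c * δ / 2 * ∑ x, if f x ≠ σ then 1 else 0) := by ring
    _ ≤ 2 * c⁻¹ ^ n * ∑ x, ∑ y, piKronecker (fun i => M (ψ i)) x y *
          (if f x ≠ f y then 1 else 0) := by gcongr
    _ ≤ 2 * ε := by rw [mul_assoc]; gcongr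
end
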